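/- arXiv:2510.04958 — 14 statements merged into one kernel-verified Lean document; each statement's English description precedes it below -/
import Mathlib

section
/- Let p be a prime and R a commutative ring. Then Ŵ(R) is an ideal of 𝕎 R: it contains 0, is closed under addition and negation, and for every a ∈ 𝕎 R and every x ∈ Ŵ(R) one has a·x ∈ Ŵ(R). -/
/-!
The structure polynomials of Witt vector arithmetic are weighted homogeneous: `wittAdd p n` has
degree `p ^ n` when `X (b, i)` has weight `p ^ i`, and `wittMul p n` has degree `p ^ n` in the
coefficients of the second factor alone. If those coefficients lie in an ideal `I` with
`I ^ m = 0` and vanish beyond index `N`, every monomial that survives evaluation has at least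
`p ^ n / p ^ N` factors from `I`, so the `n`-th coefficient vanishes once `m * p ^ N ≤ p ^ n`.
That the coefficients stay in `I` is the fact that `{x | ∀ n, x.coeff n ∈ I}` is the kernel of
`𝕎 R → 𝕎 (R ⧸ I)`.
-/

open WittVector

/-- `Ŵ(R)`: the set of Witt vectors all of whose coefficients are nilpotent and all but
finitely many of whose coefficients are zero. -/
def wittHat (p : ℕ) (R : Type*) [CommRing R] : Set (WittVector p R) :=
  {x | (∀ i, IsNilpotent (x.coeff i)) ∧ {i | x.coeff i ≠ 0}.Finite}

open MvPolynomial

section WeightedEval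

variable {σ S R : Type*} [CommSemiring S] [CommSemiring R] [Algebra S R]

theorem Ideal.prod_pow_mem_pow_sum {I : Ideal R} {f : σ → R} (d : σ → ℕ) {t : Finset σ}
    (h : ∀ v ∈ t, f v ∈ I) : ∏ v ∈ t, f v ^ d v ∈ I ^ ∑ v ∈ t, d v := by
  rw [← Finset.prod_pow_eq_pow_sum]
  exact Ideal.prod_mem_prod fun v hv => Ideal.pow_mem_pow (h v hv) _

theorem Finsupp.prod_pow_mem_pow_of_weight_eq {I : Ideal R} {f : σ → R} {w : σ → ℕ}
    {B D k : ℕ} (hI : ∀ v, 0 < w v → f v ∈ I) (hB : ∀ v, B < w v → f v = 0) (hB₀ : 0 < B)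
    (hk : k * B ≤ D) {d : σ →₀ ℕ} (hd : Finsupp.weight w d = D) :
    ∏ v ∈ d.support, f v ^ d v ∈ I ^ k := by
  classical
  by_cases hbig : ∃ v ∈ d.support, B < w v
  · obtain ⟨v, hv, hBv⟩ := hbig
    rw [Finset.prod_eq_zero hv (by rw [hB v hBv, zero_pow (Finsupp.mem_support_iff.mp hv)])]
    exact Ideal.zero_mem _
  push Not at hbig
  set t := d.support.filter (fun v => 0 < w v)
  have hD : D ≤ (∑ v ∈ t, d v) * B := calc
    D = ∑ v ∈ t, d v * w v := by
      rw [← hd, Finsupp.weight_apply, Finsupp.sum, Finset.sum_filter_of_ne]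
      · rfl
      · intro v _ hv
        exact Nat.pos_of_ne_zero (right_ne_zero_of_mul hv)
    _ ≤ ∑ v ∈ t, d v * B :=
      Finset.sum_le_sum fun v hv => Nat.mul_le_mul_left _ (hbig v (Finset.mem_filter.mp hv).1)
    _ = (∑ v ∈ t, d v) * B := Finset.sum_mul _ _ _ |>.symm
  have hkt : k ≤ ∑ v ∈ t, d v := Nat.le_of_mul_le_mul_right (hk.trans hD) hB₀
  rw [← Finset.prod_filter_mul_prod_filter_not d.support (fun v => 0 < w v)]
  refine Ideal.mul_mem_right _ _ (Ideal.pow_le_pow_right hkt ?_)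
  exact Ideal.prod_pow_mem_pow_sum d fun v hv => hI v (Finset.mem_filter.mp hv).2

theorem MvPolynomial.IsWeightedHomogeneous.aeval_mem_pow {φ : MvPolynomial σ S} {w : σ → ℕ}
    {D : ℕ} (hφ : IsWeightedHomogeneous w φ D) {I : Ideal R} {f : σ → R} {B k : ℕ}
    (hI : ∀ v, 0 < w v → f v ∈ I) (hB : ∀ v, B < w v → f v = 0) (hB₀ : 0 < B)
    (hk : k * B ≤ D) : aeval f φ ∈ I ^ k := by
  rw [aeval_def, eval₂_eq]
  exact Ideal.sum_mem _ fun d hd => Ideal.mul_mem_left _ _ <|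
    Finsupp.prod_pow_mem_pow_of_weight_eq hI hB hB₀ hk (hφ (mem_support_iff.mp hd))

end WeightedEval

theorem Nat.mul_pow_le_pow_of_add_le {p : ℕ} (hp : 1 < p) {m N n : ℕ} (hn : N + m ≤ n) :
    m * p ^ N ≤ p ^ n := calc
  m * p ^ N ≤ p ^ m * p ^ N := Nat.mul_le_mul_right _ (Nat.lt_pow_self hp).le
  _ = p ^ (N + m) := by rw [← pow_add, add_comm]
  _ ≤ p ^ n := Nat.pow_le_pow_right (by omega) hn

namespace WittVector

variable {p : ℕ}

section Homogeneity

variable {idx : Type*}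

theorem isWeightedHomogeneous_rename_wittPolynomial (R : Type*) [CommRing R]
    {w : idx × ℕ → ℕ} {b : idx} {c : ℕ} (hw : ∀ i, w (b, i) = c * p ^ i) (n : ℕ) :
    IsWeightedHomogeneous w (rename (Prod.mk b) (wittPolynomial p R n)) (c * p ^ n) := by
  rw [wittPolynomial, map_sum]
  refine IsWeightedHomogeneous.sum _ _ _ fun i hi => ?_
  rw [rename_monomial]
  apply isWeightedHomogeneous_monomial
  have hin : n - i + i = n := Nat.sub_add_cancel (Nat.lt_succ_iff.mp (Finset.mem_range.mp hi))
  rw [Finsupp.mapDomain_single, Finsupp.weight_single, hw, smul_eq_mul,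
    mul_left_comm, ← pow_add, hin]

variable [Fact p.Prime]

theorem isWeightedHomogeneous_wittStructureRat {Φ : MvPolynomial idx ℚ} {w : idx × ℕ → ℕ}
    (hΦ : ∀ n, IsWeightedHomogeneous w
      (bind₁ (fun b => rename (Prod.mk b) (wittPolynomial p ℚ n)) Φ) (p ^ n)) (n : ℕ) :
    IsWeightedHomogeneous w (wittStructureRat p Φ n) (p ^ n) := by
  induction n using Nat.strong_induction_on with
  | _ n IH =>
    have hsum : IsWeightedHomogeneous w
        (∑ i ∈ Finset.range n, C ((p : ℚ) ^ i) * wittStructureRat p Φ i ^ p ^ (n - i))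
        (p ^ n) := by
      refine IsWeightedHomogeneous.sum _ _ _ fun i hi => ?_
      have hin : i + (n - i) = n := Nat.add_sub_cancel' (Finset.mem_range.mp hi).le
      have := ((IH i (Finset.mem_range.mp hi)).pow (p ^ (n - i))).C_mul ((p : ℚ) ^ i)
      rwa [smul_eq_mul, ← pow_add, add_comm, hin] at this
    rw [wittStructureRat_rec]
    exact ((hΦ n).sub hsum).C_mul _

theorem isWeightedHomogeneous_wittStructureInt {Φ : MvPolynomial idx ℤ} {w : idx × ℕ → ℕ}
    (hΦ : ∀ n, IsWeightedHomogeneous w (bind₁ (fun b => rename (Prod.mk b)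
      (wittPolynomial p ℚ n)) (MvPolynomial.map (Int.castRingHom ℚ) Φ)) (p ^ n)) (n : ℕ) :
    IsWeightedHomogeneous w (wittStructureInt p Φ n) (p ^ n) := by
  intro d hd
  apply isWeightedHomogeneous_wittStructureRat hΦ n
  rwa [← map_wittStructureInt, MvPolynomial.coeff_map, Int.coe_castRingHom, ne_eq,
    Int.cast_eq_zero]

theorem isWeightedHomogeneous_wittAdd (n : ℕ) :
    IsWeightedHomogeneous (fun v : Fin 2 × ℕ => p ^ v.2) (wittAdd p n) (p ^ n) := by
  refine isWeightedHomogeneous_wittStructureInt (fun k => ?_) n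
  have h (b : Fin 2) := isWeightedHomogeneous_rename_wittPolynomial (p := p) ℚ
    (w := fun v : Fin 2 × ℕ => p ^ v.2) (b := b) (c := 1) (fun i => (one_mul _).symm) k
  simp only [one_mul] at h
  simpa only [map_add, MvPolynomial.map_X, bind₁_X_right] using (h 0).add (h 1)

theorem isWeightedHomogeneous_wittMul (n : ℕ) :
    IsWeightedHomogeneous (fun v : Fin 2 × ℕ => (v.1 : ℕ) * p ^ v.2) (wittMul p n) (p ^ n) := by
  refine isWeightedHomogeneous_wittStructureInt (fun k => ?_) n
  have h (b : Fin 2) := isWeightedHomogeneous_rename_wittPolynomial (p := p) ℚ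
    (w := fun v : Fin 2 × ℕ => (v.1 : ℕ) * p ^ v.2) (b := b) (c := b) (fun i => rfl) k
  simpa only [map_mul, MvPolynomial.map_X, bind₁_X_right, Fin.val_zero, Fin.val_one, zero_mul,
    zero_add, one_mul] using (h 0).mul (h 1)

end Homogeneity

variable {R : Type*} [CommRing R] [hp : Fact p.Prime]

theorem mem_ker_map_quotientMk {I : Ideal R} {x : WittVector p R} :
    x ∈ RingHom.ker (map (Ideal.Quotient.mk I)) ↔ ∀ n, x.coeff n ∈ I := by
  simp [WittVector.ext_iff, map_coeff, Ideal.Quotient.eq_zero_iff_mem]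

variable {I : Ideal R} {m N : ℕ}

theorem coeff_add_eq_zero_of_lt {x y : WittVector p R} (hI : I ^ m = ⊥)
    (hx : ∀ i, x.coeff i ∈ I) (hy : ∀ i, y.coeff i ∈ I)
    (hxN : ∀ i, N < i → x.coeff i = 0) (hyN : ∀ i, N < i → y.coeff i = 0) :
    ∀ n, N + m < n → (x + y).coeff n = 0 := by
  intro n hn
  have hmem : (x + y).coeff n ∈ I ^ m := by
    rw [add_coeff, peval]
    refine (isWeightedHomogeneous_wittAdd n).aeval_mem_pow (B := p ^ N) ?_ ?_
      (pow_pos hp.out.pos N) (Nat.mul_pow_le_pow_of_add_le hp.out.one_lt hn.le)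
    · rintro ⟨b, i⟩ -
      fin_cases b <;> simp [hx, hy]
    · rintro ⟨b, i⟩ hi
      replace hi := (Nat.pow_lt_pow_iff_right hp.out.one_lt).mp hi
      fin_cases b <;> simp [hxN i hi, hyN i hi]
  simpa [hI] using hmem

theorem coeff_mul_eq_zero_of_lt (a : WittVector p R) {x : WittVector p R} (hI : I ^ m = ⊥)
    (hx : ∀ i, x.coeff i ∈ I) (hxN : ∀ i, N < i → x.coeff i = 0) :
    ∀ n, N + m < n → (a * x).coeff n = 0 := by
  intro n hn
  have hmem : (a * x).coeff n ∈ I ^ m := by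
    rw [mul_coeff, peval]
    refine (isWeightedHomogeneous_wittMul n).aeval_mem_pow (B := p ^ N) ?_ ?_
      (pow_pos hp.out.pos N) (Nat.mul_pow_le_pow_of_add_le hp.out.one_lt hn.le)
    · rintro ⟨b, i⟩ hb
      fin_cases b
      · simp at hb
      · simp [hx]
    · rintro ⟨b, i⟩ hi
      fin_cases b
      · simp at hi
      · replace hi := (Nat.pow_lt_pow_iff_right hp.out.one_lt).mp (by simpa using hi)
        simp [hxN i hi]
  simpa [hI] using hmem

end WittVector

section WittHat

variable {p : ℕ} {R : Type*} [CommRing R]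

theorem mem_wittHat_iff {x : WittVector p R} :
    x ∈ wittHat p R ↔ ∃ I : Ideal R, IsNilpotent I ∧ (∀ i, x.coeff i ∈ I) ∧
      ∃ N, ∀ i, N < i → x.coeff i = 0 := by
  constructor
  · rintro ⟨hnil, hfin⟩
    have hrange : (Set.range x.coeff).Finite :=
      ((hfin.image x.coeff).insert 0).subset (Function.range_subset_insert_image_support x.coeff)
    refine ⟨Ideal.span (Set.range x.coeff), ?_, fun i => Ideal.subset_span ⟨i, rfl⟩, ?_⟩
    · refine (Ideal.FG.isNilpotent_iff_le_nilradical (Submodule.fg_span hrange)).mpr ?_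
      exact Ideal.span_le.mpr (Set.range_subset_iff.mpr fun i => mem_nilradical.mpr (hnil i))
    · obtain ⟨N, hN⟩ := hfin.bddAbove
      exact ⟨N, fun i hi => by_contra fun h => hi.not_ge (hN h)⟩
  · rintro ⟨I, ⟨m, hm⟩, hxI, N, hN⟩
    refine ⟨fun i => ⟨m, ?_⟩, (Set.finite_Iic N).subset fun i hi => ?_⟩
    · simpa [hm] using Ideal.pow_mem_pow (hxI i) m
    · exact not_lt.mp (mt (hN i) hi)

variable [Fact p.Prime]

theorem add_mem_wittHat {x y : WittVector p R} (hx : x ∈ wittHat p R) (hy : y ∈ wittHat p R) :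
    x + y ∈ wittHat p R := by
  obtain ⟨I, hI, hxI, N, hxN⟩ := mem_wittHat_iff.mp hx
  obtain ⟨J, hJ, hyJ, M, hyM⟩ := mem_wittHat_iff.mp hy
  obtain ⟨m, hm⟩ := (Commute.all I J).isNilpotent_add hI hJ
  have hxIJ (i : ℕ) : x.coeff i ∈ I + J := Ideal.mem_sup_left (hxI i)
  have hyIJ (i : ℕ) : y.coeff i ∈ I + J := Ideal.mem_sup_right (hyJ i)
  refine mem_wittHat_iff.mpr ⟨I + J, ⟨m, hm⟩, ?_, max N M + m, ?_⟩
  · exact mem_ker_map_quotientMk.mp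
      (add_mem (mem_ker_map_quotientMk.mpr hxIJ) (mem_ker_map_quotientMk.mpr hyIJ))
  · exact coeff_add_eq_zero_of_lt hm hxIJ hyIJ
      (fun i hi => hxN i (lt_of_le_of_lt (le_max_left N M) hi))
      (fun i hi => hyM i (lt_of_le_of_lt (le_max_right N M) hi))

theorem mul_mem_wittHat (a : WittVector p R) {x : WittVector p R} (hx : x ∈ wittHat p R) :
    a * x ∈ wittHat p R := by
  obtain ⟨I, ⟨m, hm⟩, hxI, N, hxN⟩ := mem_wittHat_iff.mp hx
  refine mem_wittHat_iff.mpr ⟨I, ⟨m, hm⟩, ?_, N + m, coeff_mul_eq_zero_of_lt a hm hxI hxN⟩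
  exact mem_ker_map_quotientMk.mp (Ideal.mul_mem_left _ a (mem_ker_map_quotientMk.mpr hxI))

end WittHat

/-- `Ŵ(R)` is an ideal of `𝕎 R`: it contains `0`, is closed under addition and negation,
and is closed under multiplication by arbitrary elements of `𝕎 R`. -/
theorem wittHat_isIdeal (p : ℕ) [Fact p.Prime] (R : Type*) [CommRing R] :
    (0 : WittVector p R) ∈ wittHat p R ∧
    (∀ x y : WittVector p R, x ∈ wittHat p R → y ∈ wittHat p R → x + y ∈ wittHat p R) ∧
    (∀ x : WittVector p R, x ∈ wittHat p R → -x ∈ wittHat p R) ∧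
    (∀ a x : WittVector p R, x ∈ wittHat p R → a * x ∈ wittHat p R) := by
  refine ⟨⟨fun i => by simp, by simp⟩, fun x y => add_mem_wittHat, fun x hx => ?_,
    fun a x => mul_mem_wittHat a⟩
  simpa using mul_mem_wittHat (-1) hx
end

section
/- For every prime p and every commutative ring R, the map 𝕎 R → 𝕎 R sending x to x − verschiebung x is bijective. -/
open WittVector

namespace OneSubVerschiebungAux

variable {p : ℕ} [Fact p.Prime] {R : Type*} [CommRing R]

/-- Coefficients of iterated Verschiebung vanish in low degrees. -/
lemma iter_ver_coeff (y : WittVector p R) :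
    ∀ n i, i < n → ((verschiebung (p := p) (R := R))^[n] y).coeff i = 0 := by
  intro n
  induction n with
  | zero => intro i h; omega
  | succ n ih =>
    intro i h
    rw [Function.iterate_succ_apply']
    cases i with
    | zero => exact verschiebung_coeff_zero _
    | succ i => rw [verschiebung_coeff_succ]; exact ih i (by omega)

lemma coeff_init (x : WittVector p R) {i n : ℕ} (h : i < n) :
    (init n x).coeff i = x.coeff i := by
  rw [init, select, coeff_mk, if_pos h]

lemma init_eq_init {a b : WittVector p R} {n : ℕ} (h : ∀ i < n, a.coeff i = b.coeff i) :
    init n a = init n b := by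
  ext i
  simp only [init, select, coeff_mk]
  split_ifs with hi
  · exact h i hi
  · rfl

lemma sub_coeff_congr {a a' b b' : WittVector p R} {k : ℕ}
    (ha : ∀ i < k + 1, a.coeff i = a'.coeff i)
    (hb : ∀ i < k + 1, b.coeff i = b'.coeff i) :
    (a - b).coeff k = (a' - b').coeff k := by
  have h : init (k + 1) (a - b) = init (k + 1) (a' - b') := by
    rw [init_sub a b, init_sub a' b', init_eq_init ha, init_eq_init hb]
  have := congrArg (fun z : WittVector p R => z.coeff k) h
  simpa only [coeff_init _ (Nat.lt_succ_self k)] using this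

lemma add_coeff_congr {a a' b b' : WittVector p R} {k : ℕ}
    (ha : ∀ i < k + 1, a.coeff i = a'.coeff i)
    (hb : ∀ i < k + 1, b.coeff i = b'.coeff i) :
    (a + b).coeff k = (a' + b').coeff k := by
  have h : init (k + 1) (a + b) = init (k + 1) (a' + b') := by
    rw [init_add a b, init_add a' b', init_eq_init ha, init_eq_init hb]
  have := congrArg (fun z : WittVector p R => z.coeff k) h
  simpa only [coeff_init _ (Nat.lt_succ_self k)] using this

lemma ver_coeff_congr {a b : WittVector p R} {k : ℕ}
    (h : ∀ i < k, a.coeff i = b.coeff i) :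
    ∀ i < k + 1, (verschiebung a).coeff i = (verschiebung b).coeff i := by
  intro i hi
  cases i with
  | zero => rw [verschiebung_coeff_zero, verschiebung_coeff_zero]
  | succ i => rw [verschiebung_coeff_succ, verschiebung_coeff_succ]; exact h i (by omega)

end OneSubVerschiebungAux

open OneSubVerschiebungAux Finset in
/-- The map `x ↦ x - verschiebung x` on `𝕎 R` is bijective. -/
theorem one_sub_verschiebung_bijective (p : ℕ) [Fact p.Prime] (R : Type*) [CommRing R] :
    Function.Bijective (fun x : WittVector p R => x - WittVector.verschiebung x) := by
  constructor
  · -- injectivity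
    intro x x' h
    simp only at h
    have hu : (x - x') = verschiebung (x - x') := by
      rw [map_sub]
      abel_nf
      abel_nf at h
      linear_combination (norm := abel) h
    have : x - x' = 0 := by
      ext n
      induction n using Nat.strong_induction_on with
      | _ n ih =>
        rw [hu, zero_coeff]
        cases n with
        | zero => exact verschiebung_coeff_zero _
        | succ n =>
          rw [verschiebung_coeff_succ]
          simpa using ih n (Nat.lt_succ_self n)
    have := sub_eq_zero.mp this
    exact this
  · -- surjectivity
    intro y
    set S : ℕ → WittVector p R := fun k => ∑ n ∈ range k, (verschiebung (p := p))^[n] y with hS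
    -- stability of coefficients of partial sums
    have stab : ∀ m i, i < m → (S m).coeff i = (S (i + 1)).coeff i := by
      intro m
      induction m with
      | zero => intro i h; omega
      | succ m ih =>
        intro i h
        rcases Nat.lt_or_ge i m with hm | hm
        · have hSm : S (m + 1) = S m + (verschiebung (p := p))^[m] y := by
            rw [hS]; exact sum_range_succ _ m
          rw [hSm]
          have : (S m + (verschiebung (p := p))^[m] y).coeff i = (S m + 0).coeff i := by
            refine add_coeff_congr (fun j _ => rfl) ?_
            intro j hj
            rw [zero_coeff]
            exact iter_ver_coeff y m j (by omega)
          rw [this, add_zero]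
          exact ih i hm
        · have : i = m := by omega
          subst this; rfl
    set x : WittVector p R := WittVector.mk p fun k => (S (k + 1)).coeff k with hx
    have hxc : ∀ k i, i < k + 1 → x.coeff i = (S (k + 1)).coeff i := by
      intro k i hi
      rw [hx, coeff_mk]
      exact (stab (k + 1) i hi).symm
    refine ⟨x, ?_⟩
    simp only
    ext k
    -- reduce to partial sum
    have h1 : (x - verschiebung x).coeff k =
        (S (k + 1) - verschiebung (S (k + 1))).coeff k := by
      refine sub_coeff_congr (hxc k) (ver_coeff_congr ?_)
      intro i hi
      exact hxc k i (by omega)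
    rw [h1]
    -- compute the partial sum difference
    have h2 : S (k + 1) - verschiebung (S (k + 1)) = y - (verschiebung (p := p))^[k + 1] y := by
      have hv : verschiebung (S (k + 1)) = S (k + 2) - y := by
        rw [hS]
        simp only [map_sum]
        rw [sum_range_succ' (fun n => (verschiebung (p := p))^[n] y) (k + 1)]
        simp only [Function.iterate_zero_apply, add_sub_cancel_right]
        refine Finset.sum_congr rfl fun n _ => ?_
        exact (Function.iterate_succ_apply' _ n y).symm
      rw [hv]
      have : S (k + 2) = S (k + 1) + (verschiebung (p := p))^[k + 1] y := by
        rw [hS]; exact sum_range_succ _ (k + 1)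
      rw [this]
      ring
    rw [h2]
    have h3 : (y - (verschiebung (p := p))^[k + 1] y).coeff k = (y - 0).coeff k := by
      refine sub_coeff_congr (fun j _ => rfl) ?_
      intro j hj
      rw [zero_coeff]
      exact iter_ver_coeff y (k + 1) j hj
    rw [h3, sub_zero]
end

section
/- Let p be a prime, n ≥ 1, and R a commutative ring in which p^n = 0. Then for every x ∈ Ŵ(R) there exists y ∈ Ŵ(R) such that p^n · x = verschiebung y; that is, p^n · Ŵ(R) ⊆ verschiebung(Ŵ(R)). -/
open WittVector

/-!
The coefficients of `x ∈ Ŵ(R)` generate a finitely generated ideal `I` of nilpotents, hence a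
nilpotent ideal, and if `x` is supported below `N` then `xᵢ ∈ I ^ ⌈pⁱ / pᴺ⌉`. This condition is
preserved by multiplication with an arbitrary Witt vector, which is seen by encoding the weights
with a polynomial variable `X` and the Teichmüller representative `[X]`. So `u = pⁿ x` has
`uₘ ∈ I ^ ⌈pᵐ / pᴺ⌉`, whence `u ∈ Ŵ(R)`; and `u₀ = pⁿ x₀ = 0`, so `u` is the Verschiebung of
its shift.
-/

theorem Nat.add_ceilDiv_le_add_ceilDiv (a b w : ℕ) : (a + b) ⌈/⌉ w ≤ a ⌈/⌉ w + b ⌈/⌉ w := by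
  rcases Nat.eq_zero_or_pos w with rfl | hw
  · simp
  rw [ceilDiv_le_iff_le_mul hw, mul_add]
  exact add_le_add (le_smul_ceilDiv hw) (le_smul_ceilDiv hw)

section WeightedRees

open Polynomial

variable {R : Type*} [CommRing R]

/-- The Rees algebra of `I` in which `X` has degree `1 / w`. -/
def weightedReesAlgebra (I : Ideal R) (w : ℕ) : Subalgebra R R[X] where
  carrier := {f | ∀ e, f.coeff e ∈ I ^ (e ⌈/⌉ w)}
  mul_mem' {f g} hf hg e := by
    rw [coeff_mul]
    refine Ideal.sum_mem _ fun ⟨c, d⟩ hcd => ?_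
    rw [← Finset.HasAntidiagonal.mem_antidiagonal.mp hcd]
    exact Ideal.pow_le_pow_right (Nat.add_ceilDiv_le_add_ceilDiv c d w)
      (pow_add I _ _ ▸ Ideal.mul_mem_mul (hf c) (hg d))
  add_mem' hf hg e := by
    rw [coeff_add]
    exact Ideal.add_mem _ (hf e) (hg e)
  algebraMap_mem' r e := by
    rw [Polynomial.algebraMap_apply, Algebra.algebraMap_self, RingHom.id_apply, coeff_C]
    split_ifs with h
    · simp [h]
    · exact Ideal.zero_mem _

theorem C_mul_X_pow_mem_weightedReesAlgebra_iff {I : Ideal R} {w : ℕ} {a : R} {e : ℕ} :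
    C a * X ^ e ∈ weightedReesAlgebra I w ↔ a ∈ I ^ (e ⌈/⌉ w) := by
  refine ⟨fun h => by simpa using h e, fun h d => ?_⟩
  rw [coeff_C_mul_X_pow]
  split_ifs with hd
  · exact hd ▸ h
  · exact Ideal.zero_mem _

end WeightedRees

namespace WittVector

open Polynomial

variable {p : ℕ} [Fact p.Prime] {R : Type*} [CommRing R]

local notation "𝕎" => WittVector p

theorem teichmuller_mul_eq_mk_of_invertible [Invertible (p : R)] (r : R) (x : 𝕎 R) :
    teichmuller p r * x = mk p fun n => r ^ p ^ n * x.coeff n := by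
  apply (ghostMap.bijective_of_invertible p R).1
  ext n
  simp only [ghostMap_apply, map_mul, ghostComponent_teichmuller]
  simp only [ghostComponent_apply, aeval_wittPolynomial, coeff_mk, Finset.mul_sum]
  refine Finset.sum_congr rfl fun i hi => ?_
  obtain ⟨k, rfl⟩ := Nat.exists_eq_add_of_le (Nat.lt_succ_iff.mp (Finset.mem_range.mp hi))
  rw [Nat.add_sub_cancel_left, mul_pow, ← pow_mul, ← pow_add, pow_add p i k]
  ring

theorem teichmuller_mul_eq_mk (r : R) (x : 𝕎 R) :
    teichmuller p r * x = mk p fun n => r ^ p ^ n * x.coeff n := by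
  -- specialise the identity for the universal pair `r₀ = X none`, `x₀ = (X (some n))ₙ`,
  -- which holds because `ℤ[r₀, x₀, x₁, …]` embeds into a `ℚ`-algebra
  let φ : MvPolynomial (Option ℕ) ℤ →+* R :=
    (MvPolynomial.aeval fun o : Option ℕ => o.elim r x.coeff).toRingHom
  let x₀ : 𝕎 (MvPolynomial (Option ℕ) ℤ) := mk p fun n => MvPolynomial.X (some n)
  have hr : φ (MvPolynomial.X none) = r := by simp [φ]
  have hx₀ : map φ x₀ = x := ext fun n => by simp [φ, x₀, map_coeff]
  have universal : teichmuller p (MvPolynomial.X none) * x₀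
      = mk p fun n => MvPolynomial.X none ^ p ^ n * x₀.coeff n := by
    refine map_injective _ (MvPolynomial.map_injective (Int.castRingHom ℚ) Int.cast_injective) ?_
    rw [map_mul, map_teichmuller, teichmuller_mul_eq_mk_of_invertible]
    ext n
    simp [map_coeff]
  have := congrArg (map φ) universal
  rw [map_mul, map_teichmuller, hr, hx₀] at this
  rw [this]
  ext n
  simp [φ, x₀, map_coeff]

theorem coeff_teichmuller_mul (r : R) (x : 𝕎 R) (n : ℕ) :
    (teichmuller p r * x).coeff n = r ^ p ^ n * x.coeff n := by
  rw [teichmuller_mul_eq_mk, coeff_mk]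

-- In `𝕎 R[X]`, multiplying by `[X]` turns the coefficients `xᵢ` into `xᵢ X ^ pⁱ`, so the
-- hypothesis says that `[X] * x` is a Witt vector over the subring `weightedReesAlgebra I w`.
theorem coeff_mul_mem_pow_ceilDiv {I : Ideal R} {w : ℕ} {x : 𝕎 R}
    (hx : ∀ i, x.coeff i ∈ I ^ (p ^ i ⌈/⌉ w)) (y : 𝕎 R) (n : ℕ) :
    (y * x).coeff n ∈ I ^ (p ^ n ⌈/⌉ w) := by
  let T := weightedReesAlgebra I w
  let ι : T →+* R[X] := T.val
  have coeff_X_mul (a : 𝕎 R) (i : ℕ) :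
      (teichmuller p (X : R[X]) * map C a).coeff i = C (a.coeff i) * X ^ p ^ i := by
    rw [coeff_teichmuller_mul, map_coeff, mul_comm]
  let z : 𝕎 T := mk p fun i =>
    ⟨C (x.coeff i) * X ^ p ^ i, C_mul_X_pow_mem_weightedReesAlgebra_iff.2 (hx i)⟩
  have hz : map ι z = teichmuller p X * map C x := ext fun i => by
    rw [map_coeff, coeff_X_mul]
    rfl
  have hy : map ι (map (algebraMap R T) y) = map C y := ext fun i => by
    simp only [map_coeff]
    rfl
  have hyz : map ι (map (algebraMap R T) y * z) = teichmuller p X * map C (y * x) := by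
    rw [map_mul, hz, hy, map_mul, mul_left_comm]
  have hmem : C ((y * x).coeff n) * X ^ p ^ n ∈ T := by
    rw [← coeff_X_mul, ← hyz, map_coeff]
    exact Subtype.prop _
  exact C_mul_X_pow_mem_weightedReesAlgebra_iff.1 hmem

theorem verschiebung_shift_one {x : 𝕎 R} (hx : x.coeff 0 = 0) : verschiebung (x.shift 1) = x := by
  rw [verschiebung_shift x 0 (by simpa using hx)]
  ext n
  simp [shift_coeff]

end WittVector

section WittHat

variable {p : ℕ} {R : Type*} [CommRing R]

local notation "𝕎" => WittVector p

theorem shift_mem_wittHat {x : 𝕎 R} (hx : x ∈ wittHat p R) (k : ℕ) : x.shift k ∈ wittHat p R :=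
  ⟨fun i => hx.1 (k + i), hx.2.preimage (add_right_injective k).injOn⟩

variable [Fact p.Prime]

theorem exists_coeff_mem_pow_ceilDiv_of_mem_wittHat {x : 𝕎 R} (hx : x ∈ wittHat p R) :
    ∃ (I : Ideal R) (N : ℕ), IsNilpotent I ∧ ∀ i, x.coeff i ∈ I ^ (p ^ i ⌈/⌉ p ^ N) := by
  obtain ⟨hnil, hfin⟩ := hx
  obtain ⟨N, hN⟩ := hfin.bddAbove
  have hp : 0 < p := (Fact.out : p.Prime).pos
  refine ⟨Ideal.span (Set.range x.coeff), N, ?_, fun i => ?_⟩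
  · have hfg : (Ideal.span (Set.range x.coeff)).FG :=
      Submodule.fg_span (((hfin.image x.coeff).insert 0).subset <| Set.range_subset_iff.2 fun i => by
        by_cases hi : x.coeff i = 0
        · exact Or.inl hi
        · exact Or.inr ⟨i, hi, rfl⟩)
    refine hfg.isNilpotent_iff_le_nilradical.2 (Ideal.span_le.2 ?_)
    rintro _ ⟨i, rfl⟩
    exact mem_nilradical.2 (hnil i)
  · by_cases hi : i ≤ N
    · have h1 : p ^ i ⌈/⌉ p ^ N ≤ 1 :=
        (ceilDiv_le_iff_le_mul (pow_pos hp N)).2 (by simpa using Nat.pow_le_pow_right hp hi)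
      exact Ideal.pow_le_pow_right h1 (by simpa using Ideal.subset_span (Set.mem_range_self i))
    · have : x.coeff i = 0 := by_contra fun h => hi (hN h)
      rw [this]
      exact Ideal.zero_mem _

theorem mem_wittHat_of_coeff_mem_pow_ceilDiv {I : Ideal R} (hI : IsNilpotent I) {N : ℕ}
    {x : 𝕎 R} (hx : ∀ i, x.coeff i ∈ I ^ (p ^ i ⌈/⌉ p ^ N)) : x ∈ wittHat p R := by
  obtain ⟨M, hM⟩ := hI
  have hp : 0 < p := (Fact.out : p.Prime).pos
  refine ⟨fun i => ⟨M, ?_⟩, (Set.finite_Iio (N + M)).subset fun i hi => ?_⟩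
  · have h1 : 1 ≤ p ^ i ⌈/⌉ p ^ N := by
      by_contra! h
      have := (ceilDiv_le_iff_le_mul (pow_pos hp N)).1 (Nat.lt_one_iff.1 h).le
      exact (pow_pos hp i).not_ge (by simpa using this)
    have := Ideal.pow_mem_pow (Ideal.pow_le_pow_right h1 (hx i)) M
    rwa [pow_one, hM, Submodule.zero_eq_bot, Ideal.mem_bot] at this
  · by_contra hiM
    replace hiM : N + M ≤ i := not_lt.1 hiM
    have hle : M ≤ p ^ i ⌈/⌉ p ^ N := calc
      M ≤ i - N := by omega
      _ ≤ p ^ (i - N) := (Nat.lt_pow_self (Fact.out : p.Prime).one_lt).le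
      _ = p ^ i ⌊/⌋ p ^ N := by rw [Nat.floorDiv_eq_div, Nat.pow_div (by omega) hp]
      _ ≤ p ^ i ⌈/⌉ p ^ N := floorDiv_le_ceilDiv
    have := Ideal.pow_le_pow_right hle (hx i)
    rw [hM, Submodule.zero_eq_bot, Ideal.mem_bot] at this
    exact hi this

end WittHat

theorem pow_mul_wittHat_subset_verschiebung_general (p : ℕ) [Fact p.Prime] (n : ℕ)
    (R : Type*) [CommRing R] (hp : (p : R) ^ n = 0) :
    ∀ x ∈ wittHat p R, ∃ y ∈ wittHat p R,
      (p : WittVector p R) ^ n * x = WittVector.verschiebung y := by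
  intro x hx
  obtain ⟨I, N, hI, hxI⟩ := exists_coeff_mem_pow_ceilDiv_of_mem_wittHat hx
  have hu : (p : WittVector p R) ^ n * x ∈ wittHat p R :=
    mem_wittHat_of_coeff_mem_pow_ceilDiv hI (coeff_mul_mem_pow_ceilDiv hxI _)
  have hu₀ : ((p : WittVector p R) ^ n * x).coeff 0 = 0 := by
    rw [← constantCoeff_apply, map_mul, map_pow, map_natCast, hp, zero_mul]
  exact ⟨_, shift_mem_wittHat hu 1, (verschiebung_shift_one hu₀).symm⟩

/-- If `p^n = 0` in `R` (with `n ≥ 1`), then `p^n · Ŵ(R) ⊆ verschiebung (Ŵ(R))`. -/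
theorem pow_mul_wittHat_subset_verschiebung (p : ℕ) [Fact p.Prime] (n : ℕ) (hn : 1 ≤ n)
    (R : Type*) [CommRing R] (hp : (p : R) ^ n = 0) :
    ∀ x ∈ wittHat p R, ∃ y ∈ wittHat p R,
      (p : WittVector p R) ^ n * x = WittVector.verschiebung y :=
  pow_mul_wittHat_subset_verschiebung_general p n R hp
end

section
/- Let p be a prime and R a p-nilpotent commutative ring. Then the ring 𝕎 R is p-adically complete: 𝕎 R, viewed as a module over itself, is adically complete (Hausdorff and complete) with respect to the ideal generated by p. -/
/-!
Write `N` for an exponent with `p ^ N = 0` in `R`. Multiplying by `p ^ N` pushes a Witt vector one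
step deeper into the Verschiebung filtration, so `p ^ (N * n)` kills the first `n` coefficients.
Hence the `p`-adic topology is finer than the coefficientwise one, which gives separatedness, and
every series `∑ p ^ j * g j` converges coefficientwise. The limit `S` of such a series satisfies
`S = ∑ j < m, p ^ j * g j + p ^ m * S'` with `S'` the limit of the tail, and this is exactly what
`p`-adic precompleteness asks for.
-/

open Finset WittVector

theorem isHausdorff_of_forall_pow_le {A ι : Type*} [CommRing A] {J : Ideal A} (I : ι → Ideal A)
    (hI : ⨅ i, I i = ⊥) (hJ : ∀ i, ∃ k, J ^ k ≤ I i) : IsHausdorff J A := by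
  refine ⟨fun x hx => ?_⟩
  rw [← Ideal.mem_bot, ← hI, Ideal.mem_iInf]
  intro i
  obtain ⟨k, hk⟩ := hJ i
  have hxk := hx k
  rw [SModEq.zero, smul_eq_mul, Ideal.mul_top] at hxk
  exact hk hxk

theorem isPrecomplete_span_singleton_of_forall_exists_sum {A : Type*} [CommRing A] (a : A)
    (h : ∀ g : ℕ → A, ∃ S, ∀ m, a ^ m ∣ S - ∑ j ∈ range m, a ^ j * g j) :
    IsPrecomplete (Ideal.span {a}) A := by
  refine ⟨fun f hf => ?_⟩
  simp only [SModEq.sub_mem, smul_eq_mul, Ideal.mul_top, Ideal.span_singleton_pow,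
    Ideal.mem_span_singleton] at hf ⊢
  choose g hg using fun k => hf (Nat.le_succ k)
  obtain ⟨S, hS⟩ := h g
  refine ⟨f 0 - S, fun n => ?_⟩
  have hfn : f n = f 0 - ∑ j ∈ range n, a ^ j * g j := by
    rw [← sum_congr rfl fun j _ => hg j, sum_range_sub', sub_sub_cancel]
  rw [hfn, sub_sub_sub_cancel_left]
  exact hS n

namespace WittVector

variable {p : ℕ} [Fact p.Prime] {R : Type*} [CommRing R] {N : ℕ}

local notation "𝕎" => WittVector p

theorem mul_p_pow_mem_ker_truncate_succ (hN : (p : R) ^ N = 0) {n : ℕ} {x : 𝕎 R}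
    (hx : x ∈ RingHom.ker (truncate (p := p) n)) :
    x * (p : 𝕎 R) ^ N ∈ RingHom.ker (truncate (p := p) (n + 1)) := by
  rw [mem_ker_truncate] at hx ⊢
  have hF : frobenius^[n] ((p : 𝕎 R) ^ N) = (p : 𝕎 R) ^ N :=
    Function.iterate_fixed (by rw [map_pow, map_natCast]) n
  rw [eq_iterate_verschiebung hx, iterate_verschiebung_mul_left, hF]
  intro i hi
  rcases Nat.lt_succ_iff_lt_or_eq.mp hi with hi | rfl
  · exact iterate_verschiebung_coeff_eq_zero _ hi
  · have := iterate_verschiebung_coeff (x.shift i * (p : 𝕎 R) ^ N) i 0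
    rw [zero_add] at this
    rw [this, ← constantCoeff_apply, map_mul, map_pow, map_natCast, hN, mul_zero]

theorem p_pow_mem_ker_truncate (hN : (p : R) ^ N = 0) (n : ℕ) :
    (p : 𝕎 R) ^ (N * n) ∈ RingHom.ker (truncate (p := p) n) := by
  induction n with
  | zero => exact (mem_ker_truncate 0 _).mpr nofun
  | succ n ih =>
    rw [mul_add_one, pow_add]
    exact mul_p_pow_mem_ker_truncate_succ hN ih

theorem span_p_pow_le_ker_truncate (hN : (p : R) ^ N = 0) (n : ℕ) :
    Ideal.span {(p : 𝕎 R)} ^ (N * n) ≤ RingHom.ker (truncate (p := p) n) := by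
  rw [Ideal.span_singleton_pow, Ideal.span_le, Set.singleton_subset_iff]
  exact p_pow_mem_ker_truncate hN n

theorem eq_of_forall_truncate_eq {x y : 𝕎 R} (h : ∀ n, truncate n x = truncate n y) : x = y := by
  rw [← sub_eq_zero, ← Ideal.mem_bot, ← TruncatedWittVector.iInf_ker_truncate, Ideal.mem_iInf]
  intro n
  rw [RingHom.mem_ker, map_sub, h, sub_self]

theorem truncate_sum_range_eq (hN : (p : R) ^ N = 0) (g : ℕ → 𝕎 R) {n m m' : ℕ}
    (hm : N * n ≤ m) (hm' : m ≤ m') :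
    truncate n (∑ j ∈ range m', (p : 𝕎 R) ^ j * g j) =
      truncate n (∑ j ∈ range m, (p : 𝕎 R) ^ j * g j) := by
  rw [← sub_eq_zero, ← map_sub, ← RingHom.mem_ker, ← sum_Ico_eq_sub _ hm']
  refine Ideal.sum_mem _ fun j hj => Ideal.mul_mem_right _ _ ?_
  exact Ideal.pow_mem_of_pow_mem _ (p_pow_mem_ker_truncate hN n) (hm.trans (mem_Ico.mp hj).1)

/-- The limit of `∑ p ^ j * g j`: by `truncate_sum_range_eq`, the `i`-th coefficient of the partial
sums is constant from `N * (i + 1)` terms on. -/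
noncomputable def pPowSeries (N : ℕ) (g : ℕ → 𝕎 R) : 𝕎 R :=
  mk p fun i => (∑ j ∈ range (N * (i + 1)), (p : 𝕎 R) ^ j * g j).coeff i

theorem truncate_pPowSeries (hN : (p : R) ^ N = 0) (g : ℕ → 𝕎 R) {n m : ℕ} (hm : N * n ≤ m) :
    truncate n (pPowSeries N g) = truncate n (∑ j ∈ range m, (p : 𝕎 R) ^ j * g j) := by
  ext i
  have hi : N * (i + 1) ≤ m := (Nat.mul_le_mul_left N i.isLt).trans hm
  have := congrArg (TruncatedWittVector.coeff ⟨i, Nat.lt_succ_self i⟩)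
    (truncate_sum_range_eq hN g le_rfl hi)
  simp only [coeff_truncate] at this ⊢
  exact this.symm

theorem pPowSeries_eq_sum_add (hN : (p : R) ^ N = 0) (g : ℕ → 𝕎 R) (m : ℕ) :
    pPowSeries N g = ∑ j ∈ range m, (p : 𝕎 R) ^ j * g j +
      (p : 𝕎 R) ^ m * pPowSeries N (fun j => g (m + j)) := by
  refine eq_of_forall_truncate_eq fun n => ?_
  rw [map_add, map_mul, truncate_pPowSeries hN g (Nat.le_add_left (N * n) m),
    truncate_pPowSeries hN _ le_rfl, ← map_mul, ← map_add, sum_range_add, mul_sum]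
  simp only [pow_add, mul_assoc]

end WittVector

/-- If `R` is `p`-nilpotent, then `𝕎 R` is `p`-adically complete. -/
theorem wittVector_isAdicComplete (p : ℕ) [Fact p.Prime] (R : Type*) [CommRing R]
    (hR : ∃ N : ℕ, (p : R) ^ N = 0) :
    IsAdicComplete (Ideal.span {(p : WittVector p R)}) (WittVector p R) := by
  obtain ⟨N, hN⟩ := hR
  have hHausdorff := isHausdorff_of_forall_pow_le _ TruncatedWittVector.iInf_ker_truncate
    fun n => ⟨N * n, span_p_pow_le_ker_truncate hN n⟩
  have hPrecomplete := isPrecomplete_span_singleton_of_forall_exists_sum _ fun g =>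
    ⟨pPowSeries N g, fun m => by
      rw [pPowSeries_eq_sum_add hN g m, add_sub_cancel_left]
      exact dvd_mul_right _ _⟩
  exact { toIsHausdorff := hHausdorff, toIsPrecomplete := hPrecomplete }
end

section
/- Let p be a prime, R a p-nilpotent commutative ring, and I an ideal of R such that for some m every a ∈ I satisfies a^(p^m) ∈ pR (i.e., the image of I in R/pR is killed by a power of Frobenius). Then there exists M such that every x ∈ 𝕎 R whose image under the ring homomorphism 𝕎 R → 𝕎(R/I) induced by the quotient map R → R/I is zero satisfies frobenius^[M] x = 0. In other words, the kernel of 𝕎 R → 𝕎(R/I) is killed by a power of the Witt vector Frobenius. -/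
open WittVector MvPolynomial

section Aux

variable {R : Type*} [CommRing R]

theorem aeval_mem_of_constantCoeff_eq_zero {J : Ideal R} {c : ℕ → R}
    (hc : ∀ n, c n ∈ J) {φ : MvPolynomial ℕ ℤ} (hφ : MvPolynomial.constantCoeff φ = 0) :
    MvPolynomial.aeval c φ ∈ J := by
  rw [← Ideal.Quotient.eq_zero_iff_mem]
  have h : (Ideal.Quotient.mk J) (MvPolynomial.aeval c φ)
      = MvPolynomial.aeval (fun n => Ideal.Quotient.mk J (c n)) φ :=
    MvPolynomial.comp_aeval_apply (f := c) (Ideal.Quotient.mk J).toIntAlgHom φ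
  rw [h]
  have h2 : (fun n => Ideal.Quotient.mk J (c n)) = fun _ : ℕ => (0 : R ⧸ J) := by
    funext n; exact Ideal.Quotient.eq_zero_iff_mem.mpr (hc n)
  rw [h2, MvPolynomial.aeval_zero', hφ, map_zero]

variable (p : ℕ) [hp : Fact p.Prime]

theorem constantCoeff_frobeniusPolyAux' (n : ℕ) :
    MvPolynomial.constantCoeff (frobeniusPolyAux p n) = 0 := by
  have h0 : (frobenius (0 : WittVector p ℤ)).coeff n = 0 := by
    rw [map_zero, zero_coeff]
  rw [coeff_frobenius] at h0
  have hc : (0 : WittVector p ℤ).coeff = fun _ : ℕ => (0 : ℤ) := by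
    funext k; exact zero_coeff p ℤ k
  rw [hc, MvPolynomial.aeval_zero'] at h0
  have h1 : MvPolynomial.constantCoeff (frobeniusPoly p n) = 0 := by
    simpa using h0
  rw [frobeniusPoly] at h1
  simp only [map_add, map_mul, map_pow, MvPolynomial.constantCoeff_X,
    MvPolynomial.constantCoeff_C] at h1
  rw [zero_pow hp.out.ne_zero, zero_add] at h1
  have hpz : (p : ℤ) ≠ 0 := by exact_mod_cast hp.out.ne_zero
  exact (mul_eq_zero.mp h1).resolve_left hpz

theorem coeff_frobenius_eq (x : WittVector p R) (n : ℕ) :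
    (frobenius x).coeff n
      = x.coeff n ^ p + p * MvPolynomial.aeval x.coeff (frobeniusPolyAux p n) := by
  rw [coeff_frobenius, frobeniusPoly]
  simp

end Aux

theorem test (p : ℕ) [Fact p.Prime] (R : Type*) [CommRing R] (x : WittVector p R) (k n : ℕ) :
    Ideal.Quotient.mk (Ideal.span {(p : R)}) (((⇑(frobenius (p := p) (R := R)))^[k] x).coeff n)
      = (Ideal.Quotient.mk _ (x.coeff n)) ^ p ^ k := by
  induction k with
  | zero => simp
  | succ k ih =>
    rw [Function.iterate_succ_apply', coeff_frobenius_eq, map_add, map_mul, map_pow, ih]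
    have : (Ideal.Quotient.mk (Ideal.span {(p : R)})) ((p : R)) = 0 :=
      Ideal.Quotient.eq_zero_iff_mem.mpr (Ideal.mem_span_singleton_self _)
    push_cast at this ⊢
    rw [this, zero_mul, add_zero, ← pow_mul, ← pow_succ]

theorem iterate_coeff_mem (p : ℕ) [hp : Fact p.Prime] {R : Type*} [CommRing R]
    (x : WittVector p R) (hx : ∀ n, x.coeff n ∈ Ideal.span {(p : R)}) (k n : ℕ) :
    ((⇑(frobenius (p := p) (R := R)))^[k] x).coeff n ∈ Ideal.span {(p : R) ^ (k + 1)} := by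
  induction k generalizing n with
  | zero => simpa using hx n
  | succ k ih =>
    rw [Function.iterate_succ_apply', coeff_frobenius_eq, Ideal.mem_span_singleton]
    have ha : (p : R) ^ (k + 1) ∣ ((⇑(frobenius (p := p) (R := R)))^[k] x).coeff n := by
      rw [← Ideal.mem_span_singleton]; exact ih n
    refine dvd_add ?_ ?_
    · calc (p : R) ^ (k + 1 + 1) ∣ ((p : R) ^ (k + 1)) ^ p := by
            rw [← pow_mul]
            exact pow_dvd_pow _ (by nlinarith [hp.out.two_le])
         _ ∣ _ := pow_dvd_pow_of_dvd ha p
    · have hb : MvPolynomial.aeval (((⇑(frobenius (p := p) (R := R)))^[k] x).coeff)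
          (frobeniusPolyAux p n) ∈ Ideal.span {(p : R) ^ (k + 1)} :=
        aeval_mem_of_constantCoeff_eq_zero ih (constantCoeff_frobeniusPolyAux' p n)
      rw [Ideal.mem_span_singleton] at hb
      rw [pow_succ']
      exact mul_dvd_mul_left _ hb

/-- Let `R` be `p`-nilpotent and `I ⊆ R` an ideal whose image in `R/pR` is killed by a power
of Frobenius. Then the kernel of `𝕎 R → 𝕎 (R/I)` is killed by a power of the Witt vector
Frobenius. -/
theorem ker_map_killed_by_frobenius_pow (p : ℕ) [Fact p.Prime] (R : Type*) [CommRing R]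
    (hR : ∃ N : ℕ, (p : R) ^ N = 0)
    (I : Ideal R) (m : ℕ) (hI : ∀ a ∈ I, a ^ p ^ m ∈ Ideal.span {(p : R)}) :
    ∃ M : ℕ, ∀ x : WittVector p R,
      WittVector.map (Ideal.Quotient.mk I) x = 0 →
      (⇑(WittVector.frobenius (p := p) (R := R)))^[M] x = 0 := by
  obtain ⟨N, hN⟩ := hR
  refine ⟨m + N, fun x hx => ?_⟩
  have hxI : ∀ n, x.coeff n ∈ I := by
    intro n
    have := congrArg (fun y => WittVector.coeff y n) hx
    simp only [map_coeff, zero_coeff] at this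
    exact Ideal.Quotient.eq_zero_iff_mem.mp this
  set y := (⇑(frobenius (p := p) (R := R)))^[m] x with hy
  have hyp : ∀ n, y.coeff n ∈ Ideal.span {(p : R)} := by
    intro n
    rw [← Ideal.Quotient.eq_zero_iff_mem, test p R x m n, ← map_pow,
      Ideal.Quotient.eq_zero_iff_mem]
    exact hI _ (hxI n)
  have key : ∀ n, ((⇑(frobenius (p := p) (R := R)))^[N] y).coeff n
      ∈ Ideal.span {(p : R) ^ (N + 1)} := fun n => iterate_coeff_mem p y hyp N n
  have hz : (p : R) ^ (N + 1) = 0 := by rw [pow_succ, hN, zero_mul]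
  ext n
  rw [add_comm m N, Function.iterate_add_apply, ← hy, zero_coeff]
  have := key n
  rw [hz, Ideal.span_singleton_eq_bot.mpr rfl, Ideal.mem_bot] at this
  exact this
end

section
/- Let p be a prime and R a p-nilpotent commutative ring. Applying the ring homomorphism 𝕎 R → 𝕎(R/pR) induced by the quotient map R → R/pR componentwise gives a bijection from the set {y : ℕ → 𝕎 R | ∀ n, frobenius (y (n+1)) = y n} onto the set {z : ℕ → 𝕎(R/pR) | ∀ n, frobenius (z (n+1)) = z n}. -/
/-!
Write `F` for the Frobenius of `𝕎 R`. If the coefficients of `x x' : 𝕎 R` agree modulo `p ^ k`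
with `k ≥ 1`, then those of `F x` and `F x'` agree modulo `p ^ (k + 1)`, because
`(F x).coeff n` is `x.coeff n ^ p` plus `p` times an integral polynomial in the coefficients
of `x`. So if `p ^ N = 0`, then `F^[N] x` only depends on the image of `x` in `𝕎 (R/pR)`.
A compatible sequence satisfies `y n = F^[N] (y (n + N))`, hence is determined by its image;
and a compatible sequence `z` over `R/pR` lifts to `n ↦ F^[N] (x (n + N))` for arbitrary lifts
`x n` of the `z n`.
-/

open WittVector

universe u

theorem MvPolynomial.dvd_aeval_sub_aeval {σ R : Type*} [CommRing R] (c : R)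
    (g : MvPolynomial σ ℤ) {x x' : σ → R} (h : ∀ i, c ∣ x i - x' i) :
    c ∣ aeval x g - aeval x' g := by
  have hx : (fun i => Ideal.Quotient.mk (Ideal.span {c}) (x i)) =
      fun i => Ideal.Quotient.mk (Ideal.span {c}) (x' i) :=
    _root_.funext fun i => Ideal.Quotient.eq.mpr (Ideal.mem_span_singleton.mpr (h i))
  rw [← Ideal.mem_span_singleton, ← Ideal.Quotient.eq, map_aeval, map_aeval, hx]

theorem pow_succ_dvd_pow_sub_pow_of_pow_dvd_sub {R : Type*} [CommRing R] {p k : ℕ} {a b : R}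
    (hk : 1 ≤ k) (h : (p : R) ^ k ∣ a - b) : (p : R) ^ (k + 1) ∣ a ^ p - b ^ p := by
  rw [← geom_sum₂_mul, pow_succ']
  exact mul_dvd_mul (dvd_geom_sum₂_self ((dvd_pow_self _ (by omega)).trans h)) h

namespace WittVector

-- One universe for `R` and `S`, as `IsPoly.map` demands.
variable {p : ℕ} [Fact p.Prime] {R S : Type u} [CommRing R] [CommRing S]

theorem map_frobenius (f : R →+* S) (x : WittVector p R) :
    map f (frobenius x) = frobenius (map f x) :=
  (frobenius_isPoly p).map f x

theorem pow_succ_dvd_coeff_frobenius_sub {k : ℕ} (hk : 1 ≤ k) {x x' : WittVector p R}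
    (h : ∀ n, (p : R) ^ k ∣ x.coeff n - x'.coeff n) (n : ℕ) :
    (p : R) ^ (k + 1) ∣ (frobenius x).coeff n - (frobenius x').coeff n := by
  simp only [coeff_frobenius, frobeniusPoly, map_add, map_mul, map_pow, MvPolynomial.aeval_X,
    map_natCast]
  rw [add_sub_add_comm, ← mul_sub]
  refine dvd_add (pow_succ_dvd_pow_sub_pow_of_pow_dvd_sub hk (h n)) ?_
  rw [pow_succ']
  exact mul_dvd_mul_left _ (MvPolynomial.dvd_aeval_sub_aeval _ _ h)

theorem map_iterate_frobenius (f : R →+* S) (m : ℕ) (x : WittVector p R) :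
    map f (frobenius^[m] x) = frobenius^[m] (map f x) :=
  Function.Semiconj.iterate_right (map_frobenius f) m x

theorem pow_succ_dvd_coeff_iterate_frobenius_sub {x x' : WittVector p R}
    (h : ∀ n, (p : R) ∣ x.coeff n - x'.coeff n) (m n : ℕ) :
    (p : R) ^ (m + 1) ∣ (frobenius^[m] x).coeff n - (frobenius^[m] x').coeff n := by
  induction m generalizing n with
  | zero => simpa using h n
  | succ m ih =>
    rw [Function.iterate_succ_apply', Function.iterate_succ_apply']
    exact pow_succ_dvd_coeff_frobenius_sub m.succ_pos ih n

theorem iterate_frobenius_eq_of_map_eq {N : ℕ} (hN : (p : R) ^ N = 0) {x x' : WittVector p R}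
    (h : map (Ideal.Quotient.mk (Ideal.span {(p : R)})) x =
      map (Ideal.Quotient.mk (Ideal.span {(p : R)})) x') :
    frobenius^[N] x = frobenius^[N] x' := by
  have hcongr (n : ℕ) : (p : R) ∣ x.coeff n - x'.coeff n := by
    rw [← Ideal.mem_span_singleton, ← Ideal.Quotient.eq]
    simpa using congrArg (coeff · n) h
  ext n
  have hdvd := pow_succ_dvd_coeff_iterate_frobenius_sub hcongr N n
  rwa [pow_succ, hN, zero_mul, zero_dvd_iff, sub_eq_zero] at hdvd

end WittVector

theorem Function.iterate_apply_add_eq_of_apply_succ {α : Type*} {f : α → α} {z : ℕ → α}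
    (hz : ∀ n, f (z (n + 1)) = z n) (k n : ℕ) : f^[k] (z (n + k)) = z n := by
  induction k generalizing n with
  | zero => rfl
  | succ k ih =>
    rw [iterate_succ_apply]
    exact (congrArg f^[k] (hz (n + k))).trans (ih n)

/-- If `R` is `p`-nilpotent, applying `𝕎 R → 𝕎 (R/pR)` componentwise gives a bijection
between Frobenius-compatible sequences in `𝕎 R` and in `𝕎 (R/pR)`. -/
theorem frobenius_compatible_sequences_bijOn (p : ℕ) [Fact p.Prime] (R : Type*) [CommRing R]
    (hR : ∃ N : ℕ, (p : R) ^ N = 0) :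
    Set.BijOn
      (fun (y : ℕ → WittVector p R) (n : ℕ) =>
        WittVector.map (Ideal.Quotient.mk (Ideal.span {(p : R)})) (y n))
      {y : ℕ → WittVector p R | ∀ n, WittVector.frobenius (y (n + 1)) = y n}
      {z : ℕ → WittVector p (R ⧸ Ideal.span {(p : R)}) |
        ∀ n, WittVector.frobenius (z (n + 1)) = z n} := by
  obtain ⟨N, hN⟩ := hR
  set π := Ideal.Quotient.mk (Ideal.span {(p : R)})
  refine ⟨fun y hy n => ?_, fun y hy y' hy' h => funext fun n => ?_, fun z hz => ?_⟩
  · simp only [← map_frobenius, hy n]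
  · rw [← Function.iterate_apply_add_eq_of_apply_succ hy N n,
      ← Function.iterate_apply_add_eq_of_apply_succ hy' N n]
    exact iterate_frobenius_eq_of_map_eq hN (congrFun h (n + N))
  · choose x hx using fun n => map_surjective π Ideal.Quotient.mk_surjective (z n)
    refine ⟨fun n => frobenius^[N] (x (n + N)), fun n => ?_, funext fun n => ?_⟩
    · rw [← Function.iterate_succ_apply' frobenius, Function.iterate_succ_apply]
      refine iterate_frobenius_eq_of_map_eq hN ?_
      rw [map_frobenius, hx, hx, add_right_comm, hz]
    · simp only [map_iterate_frobenius, hx, Function.iterate_apply_add_eq_of_apply_succ hz N n]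
end

section
/- Let p be a prime and A a commutative ring of characteristic p. The map sending x ∈ 𝕎(Ring.Perfection A p) to the sequence n ↦ (WittVector.map (Perfection.coeff A p n)) x is a bijection from 𝕎(Ring.Perfection A p) onto the set {y : ℕ → 𝕎 A | ∀ n, frobenius (y (n+1)) = y n}. -/
/-! In characteristic `p` the Witt vector Frobenius acts on coordinates as `a ↦ a ^ p`, so a
Frobenius-compatible sequence in `𝕎 A` is, coordinate by coordinate, exactly an element of
`Perfection A p`; transposing the two indices gives the inverse map. -/

open WittVector

namespace WittVector

variable {p : ℕ} [Fact p.Prime] {A : Type*} [CommRing A] [CharP A p]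

theorem frobenius_map_perfectionCoeff_succ (x : WittVector p (Perfection A p)) (n : ℕ) :
    frobenius (map (Perfection.coeff A p (n + 1)) x) = map (Perfection.coeff A p n) x := by
  ext k
  rw [coeff_frobenius_charP, map_coeff, map_coeff, Perfection.coeff_pow_p']

theorem map_perfectionCoeff_injective :
    Function.Injective fun (x : WittVector p (Perfection A p)) (n : ℕ) =>
      map (Perfection.coeff A p n) x := by
  intro x y h
  ext k : 1
  refine Perfection.ext fun n => ?_
  simpa only [map_coeff] using congrArg (coeff · k) (congrFun h n)

def ofFrobeniusCompatible (y : ℕ → WittVector p A) (hy : ∀ n, frobenius (y (n + 1)) = y n) :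
    WittVector p (Perfection A p) :=
  mk p fun k => ⟨fun n => (y n).coeff k, fun n => by
    simpa only [coeff_frobenius_charP] using congrArg (coeff · k) (hy n)⟩

theorem map_perfectionCoeff_ofFrobeniusCompatible (y : ℕ → WittVector p A)
    (hy : ∀ n, frobenius (y (n + 1)) = y n) (n : ℕ) :
    map (Perfection.coeff A p n) (ofFrobeniusCompatible y hy) = y n := by
  ext k
  rfl

end WittVector

/-- For a ring `A` of characteristic `p`, the map `𝕎 (Perfection A p) → (ℕ → 𝕎 A)`,
`x ↦ (n ↦ 𝕎(coeff n) x)`, is a bijection onto the set of Frobenius-compatible sequences. -/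
theorem wittVector_perfection_bijOn (p : ℕ) [Fact p.Prime] (A : Type*) [CommRing A]
    [CharP A p] :
    Set.BijOn
      (fun (x : WittVector p (Ring.Perfection A p)) (n : ℕ) =>
        WittVector.map (Perfection.coeff A p n) x)
      Set.univ
      {y : ℕ → WittVector p A | ∀ n, WittVector.frobenius (y (n + 1)) = y n} :=
  ⟨fun x _ => frobenius_map_perfectionCoeff_succ x,
    map_perfectionCoeff_injective.injOn,
    fun y hy => ⟨ofFrobeniusCompatible y hy, trivial,
      funext (map_perfectionCoeff_ofFrobeniusCompatible y hy)⟩⟩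
end

section
/- Let p be a prime and R an admissible ring. Then the ring homomorphism 𝕎 R → 𝕎(R_red) induced by the quotient map R → R_red admits a ring-homomorphism section: there exists a ring homomorphism s : 𝕎(R_red) → 𝕎 R such that the composite 𝕎(R_red) → 𝕎 R → 𝕎(R_red) is the identity. -/
open WittVector

/-- A `p`-nilpotent commutative ring `R` is admissible if `R_red := R ⧸ nilradical R` is a
perfect ring of characteristic `p` and the nilradical of `R/pR` is killed by a power of
Frobenius. -/
def IsAdmissible (p : ℕ) (R : Type*) [CommRing R] : Prop :=
  (∃ N : ℕ, (p : R) ^ N = 0) ∧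
  CharP (R ⧸ nilradical R) p ∧
  Function.Bijective (fun a : R ⧸ nilradical R => a ^ p) ∧
  ∃ m : ℕ, ∀ a ∈ nilradical (R ⧸ Ideal.span {(p : R)}), a ^ p ^ m = 0

/-!
Write `k = R_red` and `F` for the Witt vector Frobenius. A Witt vector `z` with nilpotent
coordinates is killed by `F^(N+m)`: since `F` raises coordinates to the `p`-th power modulo `p`,
the coordinates of `F^m z` are divisible by `p`, and each further application of `F` gains
one more factor of `p`. Hence `F^(N+m)` factors through the surjection `𝕎 R → 𝕎 k`, and
composing the factored map with the inverse of the bijection `F^(N+m)` of `𝕎 k` gives the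
section.
-/

theorem MvPolynomial.aeval_mem_of_constantCoeff_eq_zero {σ R S : Type*} [CommRing R]
    [CommRing S] [Algebra R S] {I : Ideal S} {x : σ → S} (hx : ∀ i, x i ∈ I)
    {φ : MvPolynomial σ R} (hφ : constantCoeff φ = 0) : aeval x φ ∈ I := by
  have hx0 : (fun i => Ideal.Quotient.mkₐ R I (x i)) = fun _ => 0 := by
    ext i
    exact Ideal.Quotient.eq_zero_iff_mem.mpr (hx i)
  rw [← Ideal.Quotient.eq_zero_iff_mem, ← Ideal.Quotient.mkₐ_eq_mk R, comp_aeval_apply,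
    hx0, aeval_zero', hφ, map_zero]

theorem RingHom.exists_comp_eq_id_of_semiconj {A B : Type*} [Ring A] [Ring B] (f : A →+* B)
    (hf : Function.Surjective f) (φ : A →+* A) (ψ : B →+* B) (hψ : Function.Bijective ψ)
    (hcomm : Function.Semiconj f φ ψ) (hker : RingHom.ker f ≤ RingHom.ker φ) :
    ∃ s : B →+* A, f.comp s = RingHom.id B := by
  let e := RingEquiv.ofBijective ψ hψ
  let φ' := f.liftOfSurjective hf ⟨φ, hker⟩
  refine ⟨φ'.comp e.symm.toRingHom, RingHom.ext fun b => ?_⟩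
  obtain ⟨a, ha⟩ := hf (e.symm b)
  calc f (φ' (e.symm b)) = f (φ a) := by rw [← ha, liftOfSurjective_comp_apply]
    _ = ψ (f a) := hcomm a
    _ = b := by rw [ha]; exact e.apply_symm_apply b

namespace WittVector

variable {p : ℕ} [hp : Fact p.Prime] {R : Type*} [CommRing R]

theorem mem_ker_map {S : Type*} [CommRing S] (f : R →+* S) (x : WittVector p R) :
    x ∈ RingHom.ker (map f) ↔ ∀ n, x.coeff n ∈ RingHom.ker f := by
  simp only [RingHom.mem_ker, WittVector.ext_iff, map_coeff, zero_coeff]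

theorem constantCoeff_frobeniusPoly (n : ℕ) :
    MvPolynomial.constantCoeff (frobeniusPoly p n) = 0 := by
  have h : (frobenius (0 : WittVector p ℤ)).coeff n = 0 := by rw [map_zero, zero_coeff]
  have hc : (0 : WittVector p ℤ).coeff = fun _ => 0 := funext (zero_coeff p ℤ)
  rwa [coeff_frobenius, hc, MvPolynomial.aeval_zero', Algebra.algebraMap_self,
    RingHom.id_apply] at h

theorem constantCoeff_frobeniusPolyAux (n : ℕ) :
    MvPolynomial.constantCoeff (frobeniusPolyAux p n) = 0 := by
  have h := constantCoeff_frobeniusPoly (p := p) n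
  simp only [frobeniusPoly, map_add, map_pow, map_mul, MvPolynomial.constantCoeff_X,
    MvPolynomial.constantCoeff_C, zero_pow hp.out.ne_zero, zero_add] at h
  exact (mul_eq_zero.mp h).resolve_left (by exact_mod_cast hp.out.ne_zero)

theorem coeff_frobenius_sub_pow_mem {I : Ideal R} {x : WittVector p R}
    (hx : ∀ n, x.coeff n ∈ I) (n : ℕ) :
    (frobenius x).coeff n - x.coeff n ^ p ∈ Ideal.span {(p : R)} * I := by
  have h : (frobenius x).coeff n - x.coeff n ^ p =
      p * MvPolynomial.aeval x.coeff (frobeniusPolyAux p n) := by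
    simp [coeff_frobenius, frobeniusPoly]
  rw [h]
  exact Ideal.mul_mem_mul (Ideal.mem_span_singleton_self _)
    (MvPolynomial.aeval_mem_of_constantCoeff_eq_zero hx (constantCoeff_frobeniusPolyAux n))

theorem mk_coeff_frobenius_iterate (x : WittVector p R) (j n : ℕ) :
    Ideal.Quotient.mk (Ideal.span {(p : R)}) ((frobenius^[j] x).coeff n) =
      Ideal.Quotient.mk _ (x.coeff n) ^ p ^ j := by
  induction j with
  | zero => simp
  | succ j ih =>
    have h := coeff_frobenius_sub_pow_mem (I := ⊤) (x := frobenius^[j] x) (fun _ => trivial) n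
    rw [Ideal.mul_top, ← Ideal.Quotient.eq] at h
    rw [Function.iterate_succ_apply', h, map_pow, ih, ← pow_mul, pow_succ]

theorem coeff_frobenius_iterate_mem_pow {J : Ideal R} (hpJ : (p : R) ∈ J) {x : WittVector p R}
    (hx : ∀ n, x.coeff n ∈ J) (j n : ℕ) : (frobenius^[j] x).coeff n ∈ J ^ (j + 1) := by
  induction j generalizing n with
  | zero => simpa using hx n
  | succ j ih =>
    set y := frobenius^[j] x
    have hsub : (frobenius y).coeff n - y.coeff n ^ p ∈ J ^ (j + 2) :=
      pow_succ' J (j + 1) ▸ Ideal.mul_mono_left ((Ideal.span_singleton_le_iff_mem J).mpr hpJ)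
        (coeff_frobenius_sub_pow_mem ih n)
    have hpow : y.coeff n ^ p ∈ J ^ (j + 2) :=
      Ideal.pow_le_pow_right (by nlinarith [hp.out.two_le])
        (pow_mul J (j + 1) p ▸ Ideal.pow_mem_pow (ih n) p)
    rw [Function.iterate_succ_apply', ← sub_add_cancel ((frobenius y).coeff n) (y.coeff n ^ p)]
    exact add_mem hsub hpow

theorem frobenius_iterate_eq_zero_of_coeff_mem_span {N : ℕ} (hN : (p : R) ^ N = 0)
    {x : WittVector p R} (hx : ∀ n, x.coeff n ∈ Ideal.span {(p : R)}) :
    frobenius^[N] x = 0 := by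
  ext n
  have h := Ideal.pow_le_pow_right N.le_succ (coeff_frobenius_iterate_mem_pow
    (Ideal.mem_span_singleton_self _) hx N n)
  rw [zero_coeff]
  rwa [Ideal.span_singleton_pow, hN, Ideal.span_singleton_eq_bot.mpr rfl, Ideal.mem_bot] at h

theorem frobenius_iterate_eq_zero_of_coeff_mem_nilradical {N m : ℕ} (hN : (p : R) ^ N = 0)
    (hm : ∀ a ∈ nilradical (R ⧸ Ideal.span {(p : R)}), a ^ p ^ m = 0) {z : WittVector p R}
    (hz : ∀ n, z.coeff n ∈ nilradical R) : frobenius^[N + m] z = 0 := by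
  rw [Function.iterate_add_apply]
  refine frobenius_iterate_eq_zero_of_coeff_mem_span hN fun n => ?_
  rw [← Ideal.Quotient.eq_zero_iff_mem, mk_coeff_frobenius_iterate]
  exact hm _ (mem_nilradical.mpr ((mem_nilradical.mp (hz n)).map _))

end WittVector

/-- If `R` is admissible, the ring homomorphism `𝕎 R → 𝕎 (R_red)` admits a ring-homomorphism
section. -/
theorem wittVector_map_nilradical_section (p : ℕ) [Fact p.Prime] (R : Type*) [CommRing R]
    (hR : IsAdmissible p R) :
    ∃ s : WittVector p (R ⧸ nilradical R) →+* WittVector p R,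
      (WittVector.map (Ideal.Quotient.mk (nilradical R))).comp s = RingHom.id _ := by
  obtain ⟨⟨N, hN⟩, hchar, hbij, m, hm⟩ := hR
  have : PerfectRing (R ⧸ nilradical R) p := ⟨hbij⟩
  refine RingHom.exists_comp_eq_id_of_semiconj _ (map_surjective _ Ideal.Quotient.mk_surjective)
    (WittVector.frobenius ^ (N + m)) (WittVector.frobenius ^ (N + m)) ?_ ?_ ?_
  · rw [RingHom.coe_pow]
    exact (frobenius_bijective p _).iterate _
  · rw [RingHom.coe_pow, RingHom.coe_pow]
    exact Function.Semiconj.iterate_right (fun x => (frobenius_isPoly p).map _ x) _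
  · intro z hz
    rw [mem_ker_map, Ideal.mk_ker] at hz
    rw [RingHom.mem_ker, RingHom.coe_pow]
    exact frobenius_iterate_eq_zero_of_coeff_mem_nilradical hN hm hz
end

section
/- Let p be a prime and A a commutative ring of characteristic p, with Frobenius Fr : A → A, a ↦ a^p. The following are equivalent: (i) there exists n such that the image of Fr^[n] equals the image of Fr^[n+1]; (ii) there exists n such that the Frobenius of the quotient ring A / ker(Fr^n) is surjective, where ker(Fr^n) is the kernel ideal of the n-th iterate of the Frobenius ring homomorphism; (iii) there exist an ideal I of A and n such that every a ∈ I satisfies a^(p^n) = 0 and the Frobenius of A/I is surjective. -/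
/-- Equivalent characterizations of weak semiperfectness of a commutative ring `A` of
characteristic `p`:
(i) some iterate of Frobenius has the same image as the next iterate;
(ii) the quotient of `A` by the kernel of some iterate of Frobenius is semiperfect;
(iii) `A` has a quotient by an ideal killed by a power of Frobenius which is semiperfect. -/
theorem weaklySemiperfect_tfae (p : ℕ) [Fact p.Prime] (A : Type*) [CommRing A] [CharP A p] :
    [(∃ n : ℕ, Set.range ((fun a : A => a ^ p)^[n]) =
        Set.range ((fun a : A => a ^ p)^[n + 1])),
     (∃ n : ℕ, Function.Surjective
        (fun a : A ⧸ RingHom.ker (iterateFrobenius A p n) => a ^ p)),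
     (∃ (I : Ideal A) (n : ℕ), (∀ a ∈ I, a ^ p ^ n = 0) ∧
        Function.Surjective (fun a : A ⧸ I => a ^ p))].TFAE := by
  tfae_have 1 → 2 := by
    rintro ⟨n, h⟩
    refine ⟨n, fun b => ?_⟩
    obtain ⟨x, rfl⟩ := Ideal.Quotient.mk_surjective b
    have hx : x ^ p ^ n ∈ Set.range ((fun a : A => a ^ p)^[n + 1]) := by
      rw [← h, pow_iterate]
      exact ⟨x, rfl⟩
    obtain ⟨y, hy⟩ := hx
    simp only [pow_iterate] at hy
    refine ⟨Ideal.Quotient.mk _ y, ?_⟩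
    show Ideal.Quotient.mk _ y ^ p = Ideal.Quotient.mk _ x
    rw [← map_pow, Ideal.Quotient.mk_eq_mk_iff_sub_mem, RingHom.mem_ker, map_sub,
      iterateFrobenius_def, iterateFrobenius_def, ← pow_mul, ← pow_succ', hy, sub_self]
  tfae_have 2 → 3 := by
    rintro ⟨n, h⟩
    exact ⟨RingHom.ker (iterateFrobenius A p n), n,
      fun a ha => by rwa [RingHom.mem_ker, iterateFrobenius_def] at ha, h⟩
  tfae_have 3 → 1 := by
    rintro ⟨I, n, hI, hs⟩
    refine ⟨n, le_antisymm ?_ ?_⟩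
    · rintro b ⟨x, rfl⟩
      obtain ⟨a, ha⟩ := hs (Ideal.Quotient.mk I x)
      obtain ⟨y, rfl⟩ := Ideal.Quotient.mk_surjective a
      have hmem : y ^ p - x ∈ I := by
        rw [← Ideal.Quotient.mk_eq_mk_iff_sub_mem, map_pow]
        exact ha
      have h0 := hI _ hmem
      rw [sub_pow_char_pow, sub_eq_zero] at h0
      refine ⟨y, ?_⟩
      simp only [pow_iterate]
      rw [← h0, ← pow_mul, ← pow_succ']
    · rintro b ⟨x, rfl⟩
      refine ⟨x ^ p, ?_⟩
      simp only [pow_iterate]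
      rw [← pow_mul, ← pow_succ']
  tfae_finish
end

section
/- Let p be a prime and A a commutative ring of characteristic p such that for some n the image of the n-th iterate of the Frobenius a ↦ a^p equals the image of its (n+1)-st iterate (A is weakly semiperfect). Then for every m ≥ n, the image of Ŵ(A) under the m-th iterate of the Witt vector Frobenius equals the image of Ŵ(A) under its n-th iterate; in particular, the tower (Ŵ(A), frobenius) has stabilizing images (Mittag–Leffler). -/
open WittVector

lemma iter_pow_eq {A : Type*} [CommRing A] (p k : ℕ) (a : A) :
    (fun a : A => a ^ p)^[k] a = a ^ p ^ k := by
  induction k with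
  | zero => simp
  | succ k ih => rw [Function.iterate_succ_apply', ih, ← pow_mul, pow_succ]

lemma coeff_frob_iter (p : ℕ) [Fact p.Prime] {A : Type*} [CommRing A] [CharP A p]
    (x : WittVector p A) (k i : ℕ) :
    ((⇑(WittVector.frobenius (p := p) (R := A)))^[k] x).coeff i = x.coeff i ^ p ^ k := by
  induction k with
  | zero => simp
  | succ k ih =>
      rw [Function.iterate_succ_apply', WittVector.coeff_frobenius_charP, ih, ← pow_mul,
        pow_succ]

lemma frob_mem_wittHat (p : ℕ) [Fact p.Prime] {A : Type*} [CommRing A] [CharP A p]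
    {x : WittVector p A} (hx : x ∈ wittHat p A) :
    WittVector.frobenius (p := p) (R := A) x ∈ wittHat p A := by
  obtain ⟨h1, h2⟩ := hx
  constructor
  · intro i
    rw [WittVector.coeff_frobenius_charP]
    exact (h1 i).pow_of_pos (Fact.out : p.Prime).pos.ne'
  · apply h2.subset
    intro i hi
    simp only [Set.mem_setOf_eq, WittVector.coeff_frobenius_charP] at hi ⊢
    intro h; exact hi (by rw [h]; exact zero_pow (Fact.out : p.Prime).pos.ne')

lemma key_step (p : ℕ) [Fact p.Prime]
    (A : Type*) [CommRing A] [CharP A p] (n : ℕ)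
    (hA : Set.range ((fun a : A => a ^ p)^[n]) = Set.range ((fun a : A => a ^ p)^[n + 1])) :
    (⇑(WittVector.frobenius (p := p) (R := A)))^[n + 1] '' wittHat p A =
    (⇑(WittVector.frobenius (p := p) (R := A)))^[n] '' wittHat p A := by
  apply Set.Subset.antisymm
  · rintro _ ⟨x, hx, rfl⟩
    exact ⟨WittVector.frobenius x, frob_mem_wittHat p hx, (Function.iterate_succ_apply _ _ _).symm⟩
  · rintro _ ⟨x, hx, rfl⟩
    -- choose pre-images coefficientwise
    have h : ∀ i : ℕ, ∃ b : A, b ^ p ^ (n + 1) = x.coeff i ^ p ^ n ∧ (x.coeff i = 0 → b = 0) := by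
      intro i
      by_cases h0 : x.coeff i = 0
      · exact ⟨0, by rw [h0, zero_pow (pow_ne_zero _ (Fact.out : p.Prime).pos.ne'),
          zero_pow (pow_ne_zero _ (Fact.out : p.Prime).pos.ne')], fun _ => rfl⟩
      · have : x.coeff i ^ p ^ n ∈ Set.range ((fun a : A => a ^ p)^[n + 1]) := by
          rw [← hA]
          exact ⟨x.coeff i, iter_pow_eq p n _⟩
        obtain ⟨b, hb⟩ := this
        rw [iter_pow_eq] at hb
        exact ⟨b, hb, fun h => absurd h h0⟩
    choose b hb hb0 using h
    refine ⟨WittVector.mk p b, ⟨?_, ?_⟩, ?_⟩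
    · intro i
      have hnil : IsNilpotent (x.coeff i ^ p ^ n) :=
        (hx.1 i).pow_of_pos (pow_ne_zero _ (Fact.out : p.Prime).pos.ne')
      rw [← hb i] at hnil
      have : (WittVector.mk p b).coeff i = b i := rfl
      rw [this]
      exact hnil.of_pow
    · apply hx.2.subset
      intro i hi
      simp only [Set.mem_setOf_eq] at hi ⊢
      intro h; exact hi (hb0 i h)
    · apply WittVector.ext
      intro i
      rw [coeff_frob_iter, coeff_frob_iter]
      exact hb i

/-- If `A` is a weakly semiperfect `𝔽_p`-algebra (the image of the `n`-th iterate of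
Frobenius equals the image of the `(n+1)`-st), then for every `m ≥ n` the image of `Ŵ(A)`
under the `m`-th iterate of the Witt vector Frobenius equals its image under the `n`-th
iterate; in particular the tower `(Ŵ(A), frobenius)` is Mittag-Leffler. -/
theorem wittHat_frobenius_images_stabilize (p : ℕ) [Fact p.Prime]
    (A : Type*) [CommRing A] [CharP A p] (n : ℕ)
    (hA : Set.range ((fun a : A => a ^ p)^[n]) = Set.range ((fun a : A => a ^ p)^[n + 1])) :
    ∀ m : ℕ, n ≤ m →
      (⇑(WittVector.frobenius (p := p) (R := A)))^[m] '' wittHat p A =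
      (⇑(WittVector.frobenius (p := p) (R := A)))^[n] '' wittHat p A := by
  intro m hm
  induction m, hm using Nat.le_induction with
  | base => rfl
  | succ m hm ih =>
      calc (⇑(WittVector.frobenius (p := p) (R := A)))^[m + 1] '' wittHat p A
          = ⇑(WittVector.frobenius (p := p) (R := A)) ''
              ((⇑(WittVector.frobenius (p := p) (R := A)))^[m] '' wittHat p A) := by
            rw [← Set.image_comp, ← Function.iterate_succ']
        _ = ⇑(WittVector.frobenius (p := p) (R := A)) ''
              ((⇑(WittVector.frobenius (p := p) (R := A)))^[n] '' wittHat p A) := by rw [ih]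
        _ = (⇑(WittVector.frobenius (p := p) (R := A)))^[n + 1] '' wittHat p A := by
            rw [← Set.image_comp, ← Function.iterate_succ']
        _ = _ := key_step p A n hA
end

section
/- Let A be a commutative ring with a ℤ-grading 𝒜 : ℤ → AddSubgroup A making it a graded ring, and let u ∈ 𝒜 1 be such that for every i ≥ 1 the multiplication-by-u map 𝒜 i → 𝒜 (i+1), x ↦ u·x, is bijective. Then the composite map 𝒜 1 → A → A / (u − 1)A, sending x ∈ 𝒜 1 to the class of x modulo the ideal generated by u − 1, is bijective. -/
/-!
Since `u ≡ 1` modulo `u - 1`, a homogeneous `a ∈ 𝒜 i` is congruent to `u ^ k * a`, which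
for large `k` lies in `𝒜 (1 + n) = u ^ n • 𝒜 1`; this gives surjectivity. For injectivity,
suppose `(u - 1) * c ∈ 𝒜 1` and let `c_j` be the homogeneous components of `c`. Comparing
components gives `c_(j+1) = u * c_j` for `j ≠ 0`. As only finitely many `c_j` are nonzero,
`c_0 = u ^ n * c_(-n) = 0` for large `n`, and `u ^ n * c_1 = c_(1+n) = 0` forces `c_1 = 0` since
multiplication by `u ^ n` is injective on `𝒜 1`. Hence `(u - 1) * c = u * c_0 - c_1 = 0`.
-/

open DirectSum

theorem Set.bijOn_pow_mul_of_bijOn_mul {M : Type*} [Monoid M] {s : ℤ → Set M} {u : M}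
    (hbij : ∀ i : ℤ, 1 ≤ i → Set.BijOn (fun x => u * x) (s i) (s (i + 1)))
    (n : ℕ) {i : ℤ} (hi : 1 ≤ i) : Set.BijOn (fun x => u ^ n * x) (s i) (s (i + n)) := by
  induction n with
  | zero =>
    simp only [pow_zero, one_mul, Nat.cast_zero, add_zero]
    exact Set.bijOn_id (s i)
  | succ n ih =>
    convert (hbij (i + n) (by omega)).comp ih using 1
    · funext x
      simp [pow_succ', mul_assoc]
    · push_cast
      ring_nf

theorem eq_pow_mul_of_forall_succ {M : Type*} [Monoid M] {u : M} {a : ℤ → M} {j : ℤ} {n : ℕ}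
    (h : ∀ k : ℕ, k < n → a (j + k + 1) = u * a (j + k)) : a (j + n) = u ^ n * a j := by
  induction n with
  | zero => simp
  | succ n ih =>
    rw [Nat.cast_succ, ← add_assoc, h n n.lt_succ_self, ih fun k hk => h k (by omega),
      pow_succ', mul_assoc]

theorem DirectSum.exists_decompose_apply_eq_zero {ι M σ : Type*} [DecidableEq ι]
    [AddCommMonoid M] [SetLike σ M] [AddSubmonoidClass σ M] (ℳ : ι → σ) [Decomposition ℳ]
    {f : ℕ → ι} (hf : f.Injective) (m : M) : ∃ n, decompose ℳ m (f n) = 0 := by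
  classical
  obtain ⟨n, hn⟩ :=
    Infinite.exists_notMem_finset ((decompose ℳ m).support.preimage f hf.injOn)
  exact ⟨n, by simpa using hn⟩

theorem Ideal.Quotient.mk_span_sub_one_self {R : Type*} [CommRing R] (u : R) :
    Ideal.Quotient.mk (Ideal.span {u - 1}) u = 1 :=
  sub_eq_zero.mp <| by
    rw [← map_one (Ideal.Quotient.mk _), ← map_sub, Ideal.Quotient.eq_zero_iff_mem]
    exact Ideal.mem_span_singleton_self _

section

variable {A : Type*} [CommRing A] (𝒜 : ℤ → AddSubgroup A) [GradedRing 𝒜] {u : A}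

theorem coe_decompose_sub_one_mul (hu : u ∈ 𝒜 1) (c : A) (j : ℤ) :
    (decompose 𝒜 ((u - 1) * c) (1 + j) : A) =
      u * decompose 𝒜 c j - decompose 𝒜 c (1 + j) := by
  rw [sub_one_mul, decompose_sub, DirectSum.sub_apply, AddSubgroup.coe_sub,
    coe_decompose_mul_add_of_left_mem 𝒜 hu]

theorem sub_one_mul_eq_zero_of_mem (hu : u ∈ 𝒜 1)
    (hbij : ∀ i : ℤ, 1 ≤ i → Set.BijOn (fun x => u * x) (𝒜 i) (𝒜 (i + 1)))
    {c : A} (hc : (u - 1) * c ∈ 𝒜 1) : (u - 1) * c = 0 := by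
  set a : ℤ → A := fun i => decompose 𝒜 c i
  have hrec : ∀ j : ℤ, j ≠ 0 → a (j + 1) = u * a j := fun j hj => by
    have h := coe_decompose_sub_one_mul 𝒜 hu c j
    rw [decompose_of_mem_ne 𝒜 hc (by omega : (1 : ℤ) ≠ 1 + j), eq_comm, sub_eq_zero] at h
    rw [add_comm]
    exact h.symm
  have ha1 : a 1 = 0 := by
    obtain ⟨n, hn⟩ := exists_decompose_apply_eq_zero 𝒜 (f := fun n : ℕ => 1 + (n : ℤ))
      (fun m n h => by simpa using h) c
    have h : a (1 + n) = u ^ n * a 1 := eq_pow_mul_of_forall_succ fun k _ => hrec _ (by omega)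
    refine (Set.bijOn_pow_mul_of_bijOn_mul hbij n le_rfl).injOn (decompose 𝒜 c 1).2
      (zero_mem _) ?_
    rw [mul_zero, ← h]
    simp [a, hn]
  have ha0 : a 0 = 0 := by
    obtain ⟨n, hn⟩ := exists_decompose_apply_eq_zero 𝒜 (f := fun n : ℕ => -(n : ℤ))
      (fun m n h => by simpa using h) c
    have h : a (-n + n) = u ^ n * a (-n) := eq_pow_mul_of_forall_succ fun k _ => hrec _ (by omega)
    simpa [a, hn] using h
  calc (u - 1) * c = decompose 𝒜 ((u - 1) * c) (1 + 0) := (decompose_of_mem_same 𝒜 hc).symm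
    _ = u * a 0 - a 1 := coe_decompose_sub_one_mul 𝒜 hu c 0
    _ = 0 := by rw [ha0, ha1, mul_zero, sub_zero]

theorem exists_mem_one_mk_span_sub_one_eq (hu : u ∈ 𝒜 1)
    (hbij : ∀ i : ℤ, 1 ≤ i → Set.BijOn (fun x => u * x) (𝒜 i) (𝒜 (i + 1))) (r : A) :
    ∃ x ∈ 𝒜 1, Ideal.Quotient.mk (Ideal.span {u - 1}) x = Ideal.Quotient.mk _ r := by
  have hmk (n : ℕ) (y : A) : Ideal.Quotient.mk (Ideal.span {u - 1}) (u ^ n * y) =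
      Ideal.Quotient.mk _ y := by
    simp [Ideal.Quotient.mk_span_sub_one_self]
  induction r using DirectSum.Decomposition.inductionOn 𝒜 with
  | zero => exact ⟨0, zero_mem _, rfl⟩
  | @homogeneous i a =>
    obtain ⟨k, n, hkn⟩ : ∃ k n : ℕ, (k : ℤ) + i = 1 + n :=
      ⟨(1 - i).toNat, (i - 1).toNat, by omega⟩
    have hka : u ^ k * (a : A) ∈ 𝒜 (1 + n) :=
      hkn ▸ SetLike.mul_mem_graded (by simpa using SetLike.pow_mem_graded k hu) a.2
    obtain ⟨x, hx, hxa : u ^ n * x = _⟩ :=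
      (Set.bijOn_pow_mul_of_bijOn_mul hbij n le_rfl).surjOn hka
    exact ⟨x, hx, by rw [← hmk n, hxa, hmk]⟩
  | add r r' hr hr' =>
    obtain ⟨x, hx, e⟩ := hr
    obtain ⟨x', hx', e'⟩ := hr'
    exact ⟨x + x', add_mem hx hx', by rw [map_add, e, e', map_add]⟩

end

/-- Let `A` be a ℤ-graded commutative ring and `u ∈ 𝒜 1` such that multiplication by `u` is a
bijection `𝒜 i → 𝒜 (i+1)` for all `i ≥ 1`. Then the composite `𝒜 1 → A → A/(u-1)A` is a
bijection. -/
theorem gradedComponent_one_to_quotient_bijOn {A : Type*} [CommRing A]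
    (𝒜 : ℤ → AddSubgroup A) [GradedRing 𝒜] (u : A) (hu : u ∈ 𝒜 1)
    (hbij : ∀ i : ℤ, 1 ≤ i → Set.BijOn (fun x => u * x) (𝒜 i) (𝒜 (i + 1))) :
    Set.BijOn (fun x => Ideal.Quotient.mk (Ideal.span {u - 1}) x) (𝒜 1) Set.univ := by
  refine ⟨fun _ _ => trivial, fun x hx y hy hxy => ?_, fun b _ => ?_⟩
  · obtain ⟨c, hc⟩ := Ideal.mem_span_singleton.mp (Ideal.Quotient.eq.mp hxy)
    rw [← sub_eq_zero, hc]
    exact sub_one_mul_eq_zero_of_mem 𝒜 hu hbij (hc ▸ sub_mem hx hy)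
  · obtain ⟨r, rfl⟩ := Ideal.Quotient.mk_surjective b
    exact exists_mem_one_mk_span_sub_one_eq 𝒜 hu hbij r
end

section
/- Let A be a commutative ring with a ℤ-grading 𝒜 : ℤ → AddSubgroup A making it a graded ring. Let u ∈ 𝒜 1 be such that for every i ≥ 1 the multiplication-by-u map 𝒜 i → 𝒜 (i+1) is bijective, and let t ∈ 𝒜 (−1) be such that for every i ≤ 0 the multiplication-by-t map 𝒜 i → 𝒜 (i−1) is bijective. Then the canonical ring homomorphism A → (Localization.Away t) × (Localization.Away u), given in each factor by the localization map, is injective. -/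
/-- Let `A` be a ℤ-graded commutative ring, `u ∈ 𝒜 1` with `u·(-) : 𝒜 i → 𝒜 (i+1)` bijective
for `i ≥ 1`, and `t ∈ 𝒜 (-1)` with `t·(-) : 𝒜 i → 𝒜 (i-1)` bijective for `i ≤ 0`. Then the
canonical map `A → A[1/t] × A[1/u]` is injective. -/
theorem injective_to_localizations {A : Type*} [CommRing A]
    (𝒜 : ℤ → AddSubgroup A) [GradedRing 𝒜]
    (u : A) (hu : u ∈ 𝒜 1) (t : A) (ht : t ∈ 𝒜 (-1))
    (hu_bij : ∀ i : ℤ, 1 ≤ i → Set.BijOn (fun x => u * x) (𝒜 i) (𝒜 (i + 1)))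
    (ht_bij : ∀ i : ℤ, i ≤ 0 → Set.BijOn (fun x => t * x) (𝒜 i) (𝒜 (i - 1))) :
    Function.Injective (fun a : A =>
      (algebraMap A (Localization.Away t) a, algebraMap A (Localization.Away u) a)) := by
  -- homogeneous cases
  have key_t : ∀ (n : ℕ) (i : ℤ), i ≤ 0 → ∀ a ∈ 𝒜 i, t ^ n * a = 0 → a = 0 := by
    intro n
    induction n with
    | zero => intro i _ a _ h; simpa using h
    | succ n ih =>
      intro i hi a ha h
      have hta : t * a ∈ 𝒜 (i - 1) := by
        have h0 : (-1) + i = i - 1 := by ring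
        exact h0 ▸ SetLike.mul_mem_graded ht ha
      have h1 : t ^ n * (t * a) = 0 := by rw [← h]; ring
      have h2 : t * a = 0 := ih (i - 1) (by omega) _ hta h1
      exact (ht_bij i hi).injOn ha (zero_mem _) (by simpa using h2)
  have key_u : ∀ (n : ℕ) (i : ℤ), 1 ≤ i → ∀ a ∈ 𝒜 i, u ^ n * a = 0 → a = 0 := by
    intro n
    induction n with
    | zero => intro i _ a _ h; simpa using h
    | succ n ih =>
      intro i hi a ha h
      have hua : u * a ∈ 𝒜 (i + 1) := by
        have h0 : (1 : ℤ) + i = i + 1 := by ring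
        exact h0 ▸ SetLike.mul_mem_graded hu ha
      have h1 : u ^ n * (u * a) = 0 := by rw [← h]; ring
      have h2 : u * a = 0 := ih (i + 1) (by omega) _ hua h1
      exact (hu_bij i hi).injOn ha (zero_mem _) (by simpa using h2)
  intro a b hab
  simp only [Prod.mk.injEq] at hab
  obtain ⟨h1, h2⟩ := hab
  have hc1 : algebraMap A (Localization.Away t) (a - b) = 0 := by
    rw [map_sub, h1, sub_self]
  have hc2 : algebraMap A (Localization.Away u) (a - b) = 0 := by
    rw [map_sub, h2, sub_self]
  set c := a - b with hc
  obtain ⟨⟨m1, k1, rfl⟩, hk1⟩ :=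
    (IsLocalization.map_eq_zero_iff (Submonoid.powers t) (Localization.Away t) c).mp hc1
  obtain ⟨⟨m2, k2, rfl⟩, hk2⟩ :=
    (IsLocalization.map_eq_zero_iff (Submonoid.powers u) (Localization.Away u) c).mp hc2
  simp only at hk1 hk2
  classical
  have hczero : c = 0 := by
    have hcomp : ∀ i : ℤ, (DirectSum.decompose 𝒜 c i : A) = 0 := by
      intro i
      set ci : A := (DirectSum.decompose 𝒜 c i : A) with hci
      have hcimem : ci ∈ 𝒜 i := SetLike.coe_mem _
      rcases le_or_gt i 0 with hi | hi
      · -- use t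
        have htk : t ^ k1 ∈ 𝒜 ((k1 : ℤ) • (-1)) := SetLike.pow_mem_graded k1 ht
        have : (DirectSum.decompose 𝒜 (t ^ k1 * c) ((k1 : ℤ) • (-1) + i) : A)
            = t ^ k1 * ci := DirectSum.coe_decompose_mul_add_of_left_mem 𝒜 htk
        rw [hk1] at this
        simp only [DirectSum.decompose_zero, DirectSum.zero_apply,
          ZeroMemClass.coe_zero] at this
        exact key_t k1 i hi ci hcimem this.symm
      · -- use u
        have huk : u ^ k2 ∈ 𝒜 ((k2 : ℤ) • 1) := SetLike.pow_mem_graded k2 hu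
        have : (DirectSum.decompose 𝒜 (u ^ k2 * c) ((k2 : ℤ) • 1 + i) : A)
            = u ^ k2 * ci := DirectSum.coe_decompose_mul_add_of_left_mem 𝒜 huk
        rw [hk2] at this
        simp only [DirectSum.decompose_zero, DirectSum.zero_apply,
          ZeroMemClass.coe_zero] at this
        exact key_u k2 i hi ci hcimem this.symm
    have := DirectSum.sum_support_decompose 𝒜 c
    rw [← this]
    exact Finset.sum_eq_zero fun i _ => hcomp i
  exact sub_eq_zero.mp hczero
end

section
/- Let p be a prime and A a ℤ-module that is p-adically complete, i.e., A is adically complete (Hausdorff and complete, in the sense of IsAdicComplete) with respect to the ideal span {p} of ℤ. Then the map Φ_A : (ℕ → A) → (ℕ → A) sending a sequence a to the sequence n ↦ a(n) − p • a(n+1) is bijective. (In the terminology of derived completeness: a p-complete ℤ-module is derived p-complete.) -/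
/-- A `p`-adically complete ℤ-module is derived `p`-complete: the map
`(a_n)_n ↦ (a_n - p • a_{n+1})_n` on sequences is bijective. -/
theorem derived_p_complete_of_adicComplete (p : ℕ) (hp : p.Prime)
    (A : Type*) [AddCommGroup A]
    [IsAdicComplete (Ideal.span {(p : ℤ)}) A] :
    Function.Bijective
      (fun (a : ℕ → A) (n : ℕ) => a n - (p : ℤ) • a (n + 1)) := by
  set I : Ideal ℤ := Ideal.span {(p : ℤ)} with hI
  have hmem : ∀ (m : ℕ) (x : A),
      x ∈ (I ^ m • ⊤ : Submodule ℤ A) ↔ ∃ y : A, ((p : ℤ) ^ m) • y = x := by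
    intro m x
    rw [hI, Ideal.span_singleton_pow, Submodule.ideal_span_singleton_smul,
      ← SetLike.mem_coe, Submodule.coe_pointwise_smul, Set.mem_smul_set]
    constructor
    · rintro ⟨y, -, hy⟩; exact ⟨y, hy⟩
    · rintro ⟨y, rfl⟩; exact ⟨y, Submodule.mem_top, rfl⟩
  constructor
  · intro a b hab
    have hc : ∀ n, (a n - b n) = (p : ℤ) • (a (n + 1) - b (n + 1)) := by
      intro n
      have h := congrFun hab n
      simp only [] at h
      rw [smul_sub, sub_eq_sub_iff_sub_eq_sub]
      exact h
    have hiter : ∀ m n, (a n - b n) = ((p : ℤ) ^ m) • (a (n + m) - b (n + m)) := by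
      intro m
      induction m with
      | zero => intro n; simp
      | succ m ih =>
        intro n
        rw [hc n, ih (n + 1), smul_smul, ← pow_succ']
        ring_nf
    funext n
    have h0 : a n - b n = 0 := by
      refine IsHausdorff.haus (inferInstance : IsHausdorff I A) _ (fun m => ?_)
      rw [SModEq.zero, hmem]
      exact ⟨a (n + m) - b (n + m), (hiter m n).symm⟩
    exact sub_eq_zero.mp h0
  · intro b
    set S : ℕ → ℕ → A := fun n m => ∑ k ∈ Finset.range m, ((p : ℤ) ^ k) • b (n + k) with hS
    have hcau : ∀ n, ∀ {m m' : ℕ}, m ≤ m' → S n m ≡ S n m' [SMOD (I ^ m • ⊤ : Submodule ℤ A)] := by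
      intro n m m' h
      rw [SModEq.sub_mem]
      have : S n m - S n m' = -∑ k ∈ Finset.Ico m m', ((p : ℤ) ^ k) • b (n + k) := by
        rw [hS]
        simp only [← Finset.sum_range_add_sum_Ico _ h]
        abel
      rw [this]
      refine neg_mem (Submodule.sum_mem _ fun k hk => ?_)
      rw [hmem]
      refine ⟨((p : ℤ) ^ (k - m)) • b (n + k), ?_⟩
      rw [smul_smul, ← pow_add, Nat.add_sub_cancel' (Finset.mem_Ico.1 hk).1]
    choose L hL using fun n => IsPrecomplete.prec (inferInstance : IsPrecomplete I A) (hcau n)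
    refine ⟨L, ?_⟩
    funext n
    have key : ∀ m, S n m - (p : ℤ) • S (n + 1) m = b n - ((p : ℤ) ^ m) • b (n + m) := by
      intro m
      induction m with
      | zero => simp [hS]
      | succ m ih =>
        simp only [hS] at ih ⊢
        rw [Finset.sum_range_succ, Finset.sum_range_succ, smul_add, smul_smul, ← pow_succ']
        have hn : n + 1 + m = n + (m + 1) := by omega
        rw [hn]
        calc (∑ k ∈ Finset.range m, ((p:ℤ)^k) • b (n+k)) + ((p:ℤ)^m) • b (n+m)
              - ((p:ℤ) • ∑ k ∈ Finset.range m, ((p:ℤ)^k) • b (n+1+k) + ((p:ℤ)^(m+1)) • b (n+(m+1)))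
            = ((∑ k ∈ Finset.range m, ((p:ℤ)^k) • b (n+k)) - (p:ℤ) • ∑ k ∈ Finset.range m, ((p:ℤ)^k) • b (n+1+k))
              + ((p:ℤ)^m) • b (n+m) - ((p:ℤ)^(m+1)) • b (n+(m+1)) := by abel
          _ = b n - ((p:ℤ)^(m+1)) • b (n+(m+1)) := by rw [ih]; abel
    show L n - (p : ℤ) • L (n + 1) = b n
    have h0 : L n - (p : ℤ) • L (n + 1) - b n = 0 := by
      refine IsHausdorff.haus (inferInstance : IsHausdorff I A) _ (fun m => ?_)
      rw [SModEq.zero]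
      have h1 : S n m - L n ∈ (I ^ m • ⊤ : Submodule ℤ A) := (SModEq.sub_mem).1 (hL n m)
      have h2 : S (n + 1) m - L (n + 1) ∈ (I ^ m • ⊤ : Submodule ℤ A) :=
        (SModEq.sub_mem).1 (hL (n + 1) m)
      have h3 : ((p : ℤ) ^ m) • b (n + m) ∈ (I ^ m • ⊤ : Submodule ℤ A) :=
        (hmem m _).2 ⟨b (n + m), rfl⟩
      have heq : L n - (p : ℤ) • L (n + 1) - b n =
          -(S n m - L n) + (p : ℤ) • (S (n + 1) m - L (n + 1))
            + (S n m - (p : ℤ) • S (n + 1) m - b n) := by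
        rw [smul_sub]; abel
      rw [heq, key m]
      refine add_mem (add_mem (neg_mem h1) (Submodule.smul_mem _ _ h2)) ?_
      have : b n - ((p : ℤ) ^ m) • b (n + m) - b n = -(((p : ℤ) ^ m) • b (n + m)) := by abel
      rw [this]
      exact neg_mem h3
    have := sub_eq_zero.mp h0
    exact this
end

section
/- Let p be a prime and R a p-nilpotent commutative ring. Then there exist a commutative ring R' and an R-algebra structure on R' such that R' is a faithfully flat R-module and the quotient ring R'/pR' is semiperfect, i.e., the Frobenius a ↦ a^p on R'/pR' is surjective. -/
/-!
Adjoin to `R` compatible rational powers `a^q` (`q ∈ ℚ≥0`) of every `a ∈ R`: take `R[R →₀ ℚ≥0]`,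
whose monomial `X^m` stands for `∏ a^(m a)`, modulo the relations `X^(single a 1) = a`. Every monomial
`r • X^m` is then the `p`-th power of `X^((m + single r 1) / p)`, and sums of `p`-th powers are
`p`-th powers modulo `p`, so Frobenius is surjective on `R' / pR'`.

`R'` is free over `R` on the monomials whose exponents all lie in `[0, 1)`: splitting exponents into
integer and fractional parts, `r • X^m ↦ (∏ a ^ ⌊m a⌋) r • X^(fract m)` is an `R`-linear
retraction that kills the relations. A free module with a nonempty basis is faithfully flat.
-/

universe u

open AddMonoidAlgebra

noncomputable section

namespace Finsupp

variable {α : Type*}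

def natFloor (m : α →₀ ℚ≥0) : α →₀ ℕ := m.mapRange (⌊·⌋₊) Nat.floor_zero

def fract (m : α →₀ ℚ≥0) : α →₀ ℚ≥0 := m.mapRange (fun q => q - ⌊q⌋₊) (by simp)

@[simp] lemma natFloor_apply (m : α →₀ ℚ≥0) (a : α) : m.natFloor a = ⌊m a⌋₊ := rfl

@[simp] lemma fract_apply (m : α →₀ ℚ≥0) (a : α) : m.fract a = m a - ⌊m a⌋₊ := rfl

lemma fract_apply_lt_one (m : α →₀ ℚ≥0) (a : α) : m.fract a < 1 := by
  rw [fract_apply, tsub_lt_iff_left (Nat.floor_le zero_le)]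
  exact Nat.lt_floor_add_one (m a)

lemma natFloor_cast_add_fract (m : α →₀ ℚ≥0) :
    m.natFloor.mapRange (↑) Nat.cast_zero + m.fract = m := by
  ext a
  simp [add_tsub_cancel_of_le (Nat.floor_le zero_le)]

lemma natFloor_single_one_add [DecidableEq α] (a : α) (m : α →₀ ℚ≥0) :
    (single a 1 + m).natFloor = single a 1 + m.natFloor := by
  ext b
  rcases eq_or_ne a b with rfl | hb
  · simp [add_comm (1 : ℚ≥0), Nat.floor_add_one, add_comm 1]
  · simp [single_eq_of_ne' hb]

lemma fract_single_one_add [DecidableEq α] (a : α) (m : α →₀ ℚ≥0) :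
    (single a 1 + m).fract = m.fract := by
  ext b
  rcases eq_or_ne a b with rfl | hb
  · simp [add_comm (1 : ℚ≥0), Nat.floor_add_one, add_tsub_add_eq_tsub_right]
  · simp [single_eq_of_ne' hb]

lemma natFloor_eq_zero {m : α →₀ ℚ≥0} (hm : ∀ a, m a < 1) : m.natFloor = 0 := by
  ext a
  simpa using hm a

lemma fract_eq_self {m : α →₀ ℚ≥0} (hm : ∀ a, m a < 1) : m.fract = m := by
  ext a
  simp [Nat.floor_eq_zero.mpr (hm a)]

end Finsupp

lemma add_pow_prime_of_natCast_eq_zero {A : Type*} [CommRing A] {p : ℕ} (hp : p.Prime)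
    (h : (p : A) = 0) (x y : A) : (x + y) ^ p = x ^ p + y ^ p := by
  obtain ⟨r, hr⟩ := exists_add_pow_prime_eq hp x y
  rw [hr, h, zero_mul, zero_mul, zero_mul, add_zero]

namespace AdjoinRatPow

variable (R : Type u) [CommRing R]

def fractionalExponents : Set (R →₀ ℚ≥0) := {m | ∀ a, m a < 1}

def relations : Ideal R[R →₀ ℚ≥0] :=
  Ideal.span (Set.range fun a : R => single (Finsupp.single a 1) 1 - single 0 a)

end AdjoinRatPow

abbrev AdjoinRatPow (R : Type u) [CommRing R] : Type u :=
  R[R →₀ ℚ≥0] ⧸ AdjoinRatPow.relations R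

namespace AdjoinRatPow

variable {R : Type u} [CommRing R]

local notation "mk" => Ideal.Quotient.mk (relations R)

lemma mk_single_single_one_add (a : R) (m : R →₀ ℚ≥0) (r : R) :
    mk (single (Finsupp.single a 1 + m) r) = mk (single m (a * r)) := by
  have hX : mk (single (Finsupp.single a 1) 1) = mk (single 0 a) :=
    Ideal.Quotient.eq.mpr (Ideal.subset_span ⟨a, rfl⟩)
  rw [← one_mul r, ← single_mul_single, map_mul, hX, ← map_mul, single_mul_single, zero_add,
    one_mul]

lemma mk_single_single_natCast_add (a : R) (k : ℕ) (m : R →₀ ℚ≥0) (r : R) :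
    mk (single (Finsupp.single a (k : ℚ≥0) + m) r) = mk (single m (a ^ k * r)) := by
  induction k generalizing m r with
  | zero => simp
  | succ k ih =>
    rw [Nat.cast_succ, Finsupp.single_add, add_comm (Finsupp.single a _), add_assoc,
      mk_single_single_one_add, ih, pow_succ, mul_assoc]

lemma mk_single_natCast_add (n : R →₀ ℕ) (m : R →₀ ℚ≥0) (r : R) :
    mk (single (n.mapRange (↑) Nat.cast_zero + m) r) = mk (single m (n.prod (· ^ ·) * r)) := by
  classical
  induction n using Finsupp.induction generalizing m r with
  | zero => simp
  | single_add a k n _ _ ih =>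
    rw [Finsupp.mapRange_add Nat.cast_add, Finsupp.mapRange_single, add_assoc,
      mk_single_single_natCast_add, ih, Finsupp.prod_add_index' (fun _ => pow_zero _)
      (fun _ => pow_add _), Finsupp.prod_single_index (pow_zero a), mul_left_comm, mul_assoc]

lemma mk_single (m : R →₀ ℚ≥0) (r : R) :
    mk (single m r) = mk (single m.fract (m.natFloor.prod (· ^ ·) * r)) := by
  conv_lhs => rw [← m.natFloor_cast_add_fract]
  exact mk_single_natCast_add _ _ _

variable (R) in
def retraction : R[R →₀ ℚ≥0] →ₗ[R] (fractionalExponents R →₀ R) :=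
  (AddMonoidAlgebra.basis _ R).constr R fun m =>
    Finsupp.single ⟨m.fract, m.fract_apply_lt_one⟩ (m.natFloor.prod (· ^ ·))

lemma retraction_single (m : R →₀ ℚ≥0) (r : R) :
    retraction R (single m r) =
      Finsupp.single ⟨m.fract, m.fract_apply_lt_one⟩ (m.natFloor.prod (· ^ ·) * r) := by
  have : single m r = r • AddMonoidAlgebra.basis _ R m := by
    rw [AddMonoidAlgebra.basis_apply, smul_single', mul_one]
  rw [this, map_smul, retraction, Module.Basis.constr_basis, Finsupp.smul_single, smul_eq_mul,
    mul_comm]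

lemma retraction_mul_relation (w : R[R →₀ ℚ≥0]) (a : R) :
    retraction R (w * (single (Finsupp.single a 1) 1 - single 0 a)) = 0 := by
  classical
  induction w using induction_linear with
  | zero => rw [zero_mul, map_zero]
  | add v w hv hw => rw [add_mul, map_add, hv, hw, add_zero]
  | single m r =>
    rw [mul_sub, single_mul_single, single_mul_single, add_zero, add_comm m, map_sub,
      retraction_single, retraction_single, sub_eq_zero]
    simp only [Finsupp.natFloor_single_one_add, Finsupp.fract_single_one_add]
    rw [Finsupp.prod_add_index' (fun _ => pow_zero _) (fun _ => pow_add _),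
      Finsupp.prod_single_index (pow_zero a), pow_one, mul_one]
    congr 1
    ring

lemma retraction_eq_zero {x : R[R →₀ ℚ≥0]} (hx : x ∈ relations R) : retraction R x = 0 := by
  obtain ⟨c, rfl⟩ := Finsupp.mem_ideal_span_range_iff_exists_finsupp.mp hx
  simp [Finsupp.sum, retraction_mul_relation]

variable (R) in
def fractionalMonomials : (fractionalExponents R →₀ R) →ₗ[R] R[R →₀ ℚ≥0] :=
  Finsupp.linearCombination R fun m => single m.1 1

lemma retraction_comp_fractionalMonomials :
    retraction R ∘ₗ fractionalMonomials R = LinearMap.id := by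
  ext m
  simp [fractionalMonomials, retraction_single, Finsupp.fract_eq_self m.2,
    Finsupp.natFloor_eq_zero m.2]

variable (R) in
def ofFractional : (fractionalExponents R →₀ R) →ₗ[R] AdjoinRatPow R :=
  (Ideal.Quotient.mkₐ R (relations R)).toLinearMap ∘ₗ fractionalMonomials R

lemma ofFractional_injective : Function.Injective (ofFractional R) := by
  rw [← LinearMap.ker_eq_bot, LinearMap.ker_eq_bot']
  intro l hl
  have hmem : fractionalMonomials R l ∈ relations R := Ideal.Quotient.eq_zero_iff_mem.mp hl
  calc l = (retraction R ∘ₗ fractionalMonomials R) l := by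
        rw [retraction_comp_fractionalMonomials, LinearMap.id_apply]
    _ = 0 := retraction_eq_zero hmem

lemma ofFractional_surjective : Function.Surjective (ofFractional R) := by
  intro x
  obtain ⟨w, rfl⟩ := Ideal.Quotient.mk_surjective x
  induction w using induction_linear with
  | zero => exact ⟨0, map_zero _⟩
  | add v w hv hw =>
    obtain ⟨k, hk⟩ := hv
    obtain ⟨l, hl⟩ := hw
    exact ⟨k + l, by rw [map_add, hk, hl, map_add]⟩
  | single m r =>
    refine ⟨Finsupp.single ⟨m.fract, m.fract_apply_lt_one⟩ (m.natFloor.prod (· ^ ·) * r), ?_⟩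
    rw [ofFractional, LinearMap.comp_apply, fractionalMonomials,
      Finsupp.linearCombination_single, smul_single', mul_one]
    exact (mk_single m r).symm

variable (R) in
def fractionalBasis : Module.Basis (fractionalExponents R) R (AdjoinRatPow R) :=
  .ofRepr (LinearEquiv.ofBijective _ ⟨ofFractional_injective, ofFractional_surjective⟩).symm

instance : Module.FaithfullyFlat R (AdjoinRatPow R) :=
  have : Nonempty (fractionalExponents R) := ⟨⟨0, fun _ => zero_lt_one⟩⟩
  .of_linearEquiv _ _ (fractionalBasis R).repr

lemma exists_pow_eq_mk_single {n : ℕ} (hn : n ≠ 0) (m : R →₀ ℚ≥0) (r : R) :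
    ∃ y : AdjoinRatPow R, y ^ n = mk (single m r) := by
  refine ⟨mk (single ((n : ℚ≥0)⁻¹ • (Finsupp.single r 1 + m)) 1), ?_⟩
  rw [← map_pow, single_pow, one_pow, ← Nat.cast_smul_eq_nsmul ℚ≥0, smul_smul,
    mul_inv_cancel₀ (Nat.cast_ne_zero.mpr hn), one_smul, mk_single_single_one_add, mul_one]

theorem pow_surjective_quotient_span_natCast {p : ℕ} (hp : p.Prime) :
    Function.Surjective fun a : AdjoinRatPow R ⧸ Ideal.span {(p : AdjoinRatPow R)} => a ^ p := by
  set I := Ideal.span {(p : AdjoinRatPow R)}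
  have hp0 : (p : AdjoinRatPow R ⧸ I) = 0 := by
    rw [← map_natCast (Ideal.Quotient.mk I)]
    exact Ideal.Quotient.eq_zero_iff_mem.mpr (Ideal.mem_span_singleton_self _)
  suffices h : ∀ w, ∃ y : AdjoinRatPow R ⧸ I, y ^ p = Ideal.Quotient.mk I (mk w) by
    intro x
    obtain ⟨x, rfl⟩ := Ideal.Quotient.mk_surjective x
    obtain ⟨w, rfl⟩ := Ideal.Quotient.mk_surjective x
    exact h w
  intro w
  induction w using induction_linear with
  | zero =>
    refine ⟨0, ?_⟩
    rw [map_zero, map_zero]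
    exact zero_pow (M₀ := AdjoinRatPow R ⧸ I) hp.ne_zero
  | add v w hv hw =>
    obtain ⟨a, ha⟩ := hv
    obtain ⟨b, hb⟩ := hw
    refine ⟨a + b, ?_⟩
    rw [add_pow_prime_of_natCast_eq_zero (A := AdjoinRatPow R ⧸ I) hp hp0, ha, hb, map_add,
      map_add]
  | single m r =>
    obtain ⟨y, hy⟩ := exists_pow_eq_mk_single hp.ne_zero m r
    exact ⟨Ideal.Quotient.mk I y, by rw [← map_pow, hy]⟩

end AdjoinRatPow

end

theorem exists_faithfullyFlat_semiperfect_general (p : ℕ) (hp : p.Prime)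
    (R : Type u) [CommRing R] :
    ∃ (R' : Type u) (_ : CommRing R') (_ : Algebra R R'),
      Module.FaithfullyFlat R R' ∧
      Function.Surjective (fun a : R' ⧸ Ideal.span {(p : R')} => a ^ p) :=
  ⟨AdjoinRatPow R, inferInstance, inferInstance, inferInstance,
    AdjoinRatPow.pow_surjective_quotient_span_natCast hp⟩

/-- Every `p`-nilpotent commutative ring `R` admits a faithfully flat algebra `R'` such that
`R'/pR'` is semiperfect (its Frobenius is surjective). -/
theorem exists_faithfullyFlat_semiperfect (p : ℕ) (hp : p.Prime)
    (R : Type u) [CommRing R] (hR : ∃ N : ℕ, (p : R) ^ N = 0) :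
    ∃ (R' : Type u) (_ : CommRing R') (_ : Algebra R R'),
      Module.FaithfullyFlat R R' ∧
      Function.Surjective (fun a : R' ⧸ Ideal.span {(p : R')} => a ^ p) :=
  exists_faithfullyFlat_semiperfect_general p hp R
end
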